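/- arXiv:1103.5575 — 7 statements merged into one kernel-verified Lean document; each statement's English description precedes it below -/
import Mathlib

section
/- Let p > 0 with p ≠ 1, b ∈ ℝ, c ≥ 0, let F be a Lévy measure on ℝ with F((−∞,−1]) = 0 and ∫_{(1,∞)} (1+x)^{1−p} dF(x) < ∞, and let h be a truncation function. Then the function g(π) := πb − pπ²c/2 + ∫_{(−1,∞)} (((1+πx)^{1−p} − 1)/(1−p) − π h(x)) dF(x) is differentiable at every π in the interior of A = {π ∈ ℝ : F({x : 1 + πx ≤ 0}) = 0}, the function x ↦ x(1+πx)^{−p} − h(x) is F-integrable for such π, and g′(π) = b − pπc + ∫_{(−1,∞)} (x(1+πx)^{−p} − h(x)) dF(x). -/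
open MeasureTheory Set Filter
open scoped ENNReal Topology

/-!
Differentiation under the integral sign. Since `π` is interior to `A`, there is `ε > 0` with
`ε * |x| < 1 + q * x` for `F`-a.e. `x` and all `q` within `ε` of `π`. For such `q` the integrand
and its `q`-derivative are dominated, uniformly in `q`, by a multiple of
`min (x ^ 2) 1 + 1_{x > 1} (1 + x) ^ (1 - p)`, which is `F`-integrable by the Lévy and moment
hypotheses: near `0` the truncation function is the identity and the Taylor expansion of
`u ↦ u ^ (1 - p) / (1 - p)` at `u = 1` gives `O(x ^ 2)`, while away from `0` both are
`O(1 + (1 + q * x) ^ (1 - p))`, and `ε * |x| ≤ 1 + q * x ≤ 1 + |q| * |x|` bounds this power.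
-/

lemma exists_abs_one_add_rpow_sub_one_le (r : ℝ) :
    ∃ L ≥ (0 : ℝ), ∀ t : ℝ, |t| ≤ 1 / 2 → |(1 + t) ^ r - 1| ≤ L * |t| := by
  obtain ⟨L, hL⟩ : ∃ L, LipschitzOnWith L (fun u : ℝ => u ^ r) (Icc (1 / 2) (3 / 2)) :=
    ContDiffOn.exists_lipschitzOnWith (n := 1)
      (fun u hu => (Real.contDiffAt_rpow_const_of_ne
        (by linarith [hu.1] : (0 : ℝ) < u).ne').contDiffWithinAt)
      one_ne_zero (convex_Icc _ _) isCompact_Icc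
  refine ⟨L, L.2, fun t ht => ?_⟩
  have hmem : 1 + t ∈ Icc (1 / 2 : ℝ) (3 / 2) := by
    constructor <;> linarith [abs_le.mp ht]
  simpa [Real.dist_eq] using hL.dist_le_mul _ hmem 1 (by norm_num)

lemma hasDerivAt_rpow_integrand {p q x : ℝ} (hp1 : p ≠ 1) (hqx : 0 < 1 + q * x) (a : ℝ) :
    HasDerivAt (fun q => ((1 + q * x) ^ (1 - p) - 1) / (1 - p) - q * a)
      (x * (1 + q * x) ^ (-p) - a) q := by
  have hlin : HasDerivAt (fun q => 1 + q * x) x q := by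
    simpa using (hasDerivAt_mul_const x).const_add 1
  refine ((((hlin.rpow_const (p := 1 - p) (Or.inl hqx.ne')).sub_const 1).div_const
    (1 - p)).sub (hasDerivAt_mul_const a)).congr_deriv ?_
  rw [show 1 - p - 1 = -p by ring]
  field_simp [sub_ne_zero.mpr hp1.symm]

lemma exists_abs_rpow_taylor_le {p : ℝ} (hp1 : p ≠ 1) :
    ∃ L ≥ (0 : ℝ), ∀ t : ℝ, |t| ≤ 1 / 2 →
      |((1 + t) ^ (1 - p) - 1) / (1 - p) - t| ≤ L * t ^ 2 := by
  obtain ⟨L, hL0, hL⟩ := exists_abs_one_add_rpow_sub_one_le (-p)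
  refine ⟨L, hL0, fun t ht => ?_⟩
  have hseg : ∀ s ∈ uIcc 0 t, |s| ≤ |t| := fun s hs => by
    simpa using abs_sub_left_of_mem_uIcc hs
  have := Convex.norm_image_sub_le_of_norm_hasDerivWithin_le
    (f := fun s => ((1 + s * 1) ^ (1 - p) - 1) / (1 - p) - s * 1)
    (fun s hs => (hasDerivAt_rpow_integrand hp1
      (by linarith [abs_le.mp ((hseg s hs).trans ht)]) 1).hasDerivWithinAt)
    (fun s hs => by
      simpa using (hL s ((hseg s hs).trans ht)).trans
        (mul_le_mul_of_nonneg_left (hseg s hs) hL0))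
    (convex_uIcc 0 t) left_mem_uIcc right_mem_uIcc
  simpa [sq, mul_assoc] using this

noncomputable def levyBound (p x : ℝ) : ℝ :=
  min (x ^ 2) 1 + (Ioi 1).indicator (fun y => (1 + y) ^ (1 - p)) x

lemma one_add_mul_rpow_le {r ε δ K x q : ℝ} (hε : 0 < ε) (hδ : 0 < δ) (hK : 0 ≤ K)
    (hx : -1 < x) (hδx : δ < |x|) (hq : |q| ≤ K) (hqx : ε * |x| ≤ 1 + q * x) :
    (1 + q * x) ^ r ≤ ((ε * δ) ^ r + (2 * (1 + K)) ^ r) *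
      (1 + (Ioi 1).indicator (fun y => (1 + y) ^ r) x) := by
  set u := 1 + q * x
  have hεδ : ε * δ ≤ u := (mul_le_mul_of_nonneg_left hδx.le hε.le).trans hqx
  have hhi : u ≤ 1 + K * |x| := by
    have := (le_abs_self (q * x)).trans_eq (abs_mul q x)
    nlinarith [abs_nonneg x]
  have hI : 0 ≤ (Ioi 1).indicator (fun y => (1 + y) ^ r) x :=
    indicator_nonneg (fun y hy => Real.rpow_nonneg (by linarith [mem_Ioi.mp hy]) _) x
  have hεδr : 0 ≤ (ε * δ) ^ r := Real.rpow_nonneg (by positivity) _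
  have hKr : 0 ≤ (2 * (1 + K)) ^ r := Real.rpow_nonneg (by positivity) _
  have hu : 0 < u := (mul_pos hε hδ).trans_le hεδ
  rcases lt_or_ge r 0 with hr | hr
  · have : u ^ r ≤ (ε * δ) ^ r := Real.rpow_le_rpow_of_nonpos (by positivity) hεδ hr.le
    nlinarith
  · have hup : u ^ r ≤ (1 + K) ^ r * (1 + |x|) ^ r := by
      rw [← Real.mul_rpow (by linarith) (by positivity)]
      exact Real.rpow_le_rpow hu.le (by nlinarith [abs_nonneg x]) hr
    have h1K : (1 + K) ^ r ≤ (2 * (1 + K)) ^ r :=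
      Real.rpow_le_rpow (by linarith) (by linarith) hr
    rcases le_or_gt x 1 with hx1 | hx1
    · have h2 : (1 + |x|) ^ r ≤ 2 ^ r :=
        Real.rpow_le_rpow (by positivity) (by linarith [abs_le.mpr ⟨hx.le, hx1⟩]) hr
      have : u ^ r ≤ (2 * (1 + K)) ^ r := by
        rw [Real.mul_rpow (by norm_num) (by positivity), mul_comm]
        exact hup.trans (mul_le_mul_of_nonneg_left h2 (by positivity))
      rw [indicator_of_notMem (by simpa using hx1)]
      linarith
    · rw [indicator_of_mem (mem_Ioi.mpr hx1)] at hI ⊢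
      rw [abs_of_pos (by linarith)] at hup
      have : u ^ r ≤ (2 * (1 + K)) ^ r * (1 + x) ^ r :=
        hup.trans (mul_le_mul_of_nonneg_right h1K hI)
      nlinarith

lemma le_mul_levyBound {p δ a B x v : ℝ} (hδ : 0 < δ) (hδ1 : δ ≤ 1) (ha : 0 ≤ a) (hB : 0 ≤ B)
    (hsmall : |x| ≤ δ → v ≤ a * x ^ 2)
    (hlarge : δ < |x| → v ≤ B * (1 + (Ioi 1).indicator (fun y => (1 + y) ^ (1 - p)) x)) :
    v ≤ (a + B / δ ^ 2) * levyBound p x := by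
  set I := (Ioi 1).indicator (fun y => (1 + y) ^ (1 - p)) x
  have hI : 0 ≤ I :=
    indicator_nonneg (fun y hy => Real.rpow_nonneg (by linarith [mem_Ioi.mp hy]) _) x
  have hBδ : 0 ≤ B / δ ^ 2 := by positivity
  have hg : 0 ≤ levyBound p x := add_nonneg (le_min (sq_nonneg x) zero_le_one) hI
  rcases le_or_gt |x| δ with hxδ | hxδ
  · have hmin : min (x ^ 2) 1 = x ^ 2 :=
      min_eq_left (by nlinarith [sq_abs x, abs_nonneg x])
    calc v ≤ a * x ^ 2 := hsmall hxδ
      _ ≤ a * levyBound p x + B / δ ^ 2 * levyBound p x := by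
        rw [levyBound, hmin]; nlinarith
      _ = _ := by ring
  · have hmin : δ ^ 2 ≤ min (x ^ 2) 1 :=
      le_min (by nlinarith [sq_abs x]) (by nlinarith)
    calc v ≤ B * (1 + I) := hlarge hxδ
      _ = B / δ ^ 2 * (δ ^ 2 + δ ^ 2 * I) := by field_simp
      _ ≤ B / δ ^ 2 * levyBound p x := by
        refine mul_le_mul_of_nonneg_left ?_ hBδ
        change δ ^ 2 + δ ^ 2 * I ≤ min (x ^ 2) 1 + I
        nlinarith [mul_le_mul_of_nonneg_right (by nlinarith : δ ^ 2 ≤ 1) hI]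
      _ ≤ _ := by nlinarith

section Bounds

variable {p ε δ K M : ℝ} {h : ℝ → ℝ}

lemma exists_abs_integrand_le_of_lt_abs (hp1 : p ≠ 1) (hε : 0 < ε) (hδ : 0 < δ) (hK : 0 ≤ K)
    (hM : ∀ y, |h y| ≤ M) :
    ∃ B ≥ (0 : ℝ), ∀ x q, -1 < x → δ < |x| → |q| ≤ K → ε * |x| < 1 + q * x →
      |((1 + q * x) ^ (1 - p) - 1) / (1 - p) - q * h x| ≤
        B * (1 + (Ioi 1).indicator (fun y => (1 + y) ^ (1 - p)) x) := by
  set A := (ε * δ) ^ (1 - p) + (2 * (1 + K)) ^ (1 - p)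
  have hA : 0 ≤ A := by positivity
  have hM0 : 0 ≤ M := (abs_nonneg _).trans (hM 0)
  have hp1' : 0 < |1 - p| := abs_pos.mpr (sub_ne_zero.mpr hp1.symm)
  refine ⟨(A + 1) / |1 - p| + K * M, by positivity, fun x q hx hδx hq hqx => ?_⟩
  set I := (Ioi 1).indicator (fun y => (1 + y) ^ (1 - p)) x
  have hI : 0 ≤ I :=
    indicator_nonneg (fun y hy => Real.rpow_nonneg (by linarith [mem_Ioi.mp hy]) _) x
  have hu : 0 ≤ (1 + q * x) ^ (1 - p) :=
    Real.rpow_nonneg ((mul_nonneg hε.le (abs_nonneg x)).trans hqx.le) _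
  have hpow : (1 + q * x) ^ (1 - p) + 1 ≤ (A + 1) * (1 + I) := by
    nlinarith [one_add_mul_rpow_le (r := 1 - p) hε hδ hK hx hδx hq hqx.le]
  calc |((1 + q * x) ^ (1 - p) - 1) / (1 - p) - q * h x|
      ≤ |((1 + q * x) ^ (1 - p) - 1) / (1 - p)| + |q * h x| := abs_sub _ _
    _ ≤ ((A + 1) * (1 + I)) / |1 - p| + K * (M * (1 + I)) := by
      rw [abs_div, abs_mul]
      gcongr
      · exact (abs_sub _ _).trans (by rw [abs_of_nonneg hu, abs_one]; exact hpow)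
      · exact (hM x).trans (le_mul_of_one_le_right hM0 (by linarith))
    _ = ((A + 1) / |1 - p| + K * M) * (1 + I) := by ring

lemma exists_abs_deriv_integrand_le_of_lt_abs (hε : 0 < ε) (hδ : 0 < δ) (hK : 0 ≤ K)
    (hM : ∀ y, |h y| ≤ M) :
    ∃ B ≥ (0 : ℝ), ∀ x q, -1 < x → δ < |x| → |q| ≤ K → ε * |x| < 1 + q * x →
      |x * (1 + q * x) ^ (-p) - h x| ≤
        B * (1 + (Ioi 1).indicator (fun y => (1 + y) ^ (1 - p)) x) := by
  set A := (ε * δ) ^ (1 - p) + (2 * (1 + K)) ^ (1 - p)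
  have hA : 0 ≤ A := by positivity
  have hM0 : 0 ≤ M := (abs_nonneg _).trans (hM 0)
  refine ⟨A / ε + M, by positivity, fun x q hx hδx hq hqx => ?_⟩
  set I := (Ioi 1).indicator (fun y => (1 + y) ^ (1 - p)) x
  have hI : 0 ≤ I :=
    indicator_nonneg (fun y hy => Real.rpow_nonneg (by linarith [mem_Ioi.mp hy]) _) x
  have hu : 0 < 1 + q * x := (mul_nonneg hε.le (abs_nonneg x)).trans_lt hqx
  -- `x * u ^ (-p) = (x / u) * u ^ (1 - p)` and `|x / u| ≤ 1 / ε`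
  have hxu : |x * (1 + q * x) ^ (-p)| ≤ (1 + q * x) ^ (1 - p) / ε := by
    rw [abs_mul, abs_of_pos (Real.rpow_pos_of_pos hu _), le_div_iff₀ hε,
      show (1 - p) = 1 + -p by ring, Real.rpow_add hu, Real.rpow_one]
    nlinarith [Real.rpow_pos_of_pos hu (-p)]
  calc |x * (1 + q * x) ^ (-p) - h x|
      ≤ |x * (1 + q * x) ^ (-p)| + |h x| := abs_sub _ _
    _ ≤ A * (1 + I) / ε + M * (1 + I) := by
      gcongr
      · exact hxu.trans (by gcongr; exact one_add_mul_rpow_le hε hδ hK hx hδx hq hqx.le)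
      · exact (hM x).trans (le_mul_of_one_le_right hM0 (by linarith))
    _ = (A / ε + M) * (1 + I) := by ring

lemma exists_scale_of_eventually_eq_id (hK : 0 ≤ K) (hh0 : ∀ᶠ y in 𝓝 0, h y = y) :
    ∃ δ > 0, δ ≤ 1 ∧ K * δ ≤ 1 / 2 ∧ ∀ y, |y| ≤ δ → h y = y := by
  obtain ⟨η, hη, hηh⟩ := Metric.eventually_nhds_iff.mp hh0
  have hδK : min (η / 2) (1 / (2 * (K + 1))) ≤ 1 / (2 * (K + 1)) := min_le_right _ _
  refine ⟨min (η / 2) (1 / (2 * (K + 1))), by positivity, ?_, ?_, fun y hy => hηh ?_⟩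
  · exact hδK.trans (by rw [div_le_one (by positivity)]; linarith)
  · calc K * min (η / 2) (1 / (2 * (K + 1))) ≤ (K + 1) * (1 / (2 * (K + 1))) :=
          mul_le_mul (by linarith) hδK (by positivity) (by linarith)
      _ = 1 / 2 := by field_simp
  · rw [Real.dist_eq, sub_zero]
    linarith [min_le_left (η / 2) (1 / (2 * (K + 1)))]

lemma abs_mul_le_of_abs_le {q x K δ : ℝ} (hK : 0 ≤ K) (hq : |q| ≤ K) (hx : |x| ≤ δ)
    (hKδ : K * δ ≤ 1 / 2) : |q * x| ≤ 1 / 2 := by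
  rw [abs_mul]
  exact (mul_le_mul hq hx (abs_nonneg x) hK).trans hKδ

lemma exists_abs_integrand_le (hp1 : p ≠ 1) (hε : 0 < ε) (hK : 0 ≤ K) (hM : ∀ y, |h y| ≤ M)
    (hh0 : ∀ᶠ y in 𝓝 0, h y = y) :
    ∃ C, ∀ x q, -1 < x → |q| ≤ K → ε * |x| < 1 + q * x →
      |((1 + q * x) ^ (1 - p) - 1) / (1 - p) - q * h x| ≤ C * levyBound p x := by
  obtain ⟨δ, hδ, hδ1, hKδ, hδh⟩ := exists_scale_of_eventually_eq_id hK hh0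
  obtain ⟨L, hL0, hL⟩ := exists_abs_rpow_taylor_le hp1
  obtain ⟨B, hB, hBx⟩ := exists_abs_integrand_le_of_lt_abs hp1 hε hδ hK hM
  refine ⟨L * K ^ 2 + B / δ ^ 2, fun x q hx hq hqx =>
    le_mul_levyBound hδ hδ1 (by positivity) hB (fun hxδ => ?_) (hBx x q hx · hq hqx)⟩
  rw [hδh x hxδ]
  calc _ ≤ L * (q * x) ^ 2 := hL _ (abs_mul_le_of_abs_le hK hq hxδ hKδ)
    _ = L * |q| ^ 2 * x ^ 2 := by rw [sq_abs]; ring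
    _ ≤ L * K ^ 2 * x ^ 2 := by gcongr

lemma exists_abs_deriv_integrand_le (hε : 0 < ε) (hK : 0 ≤ K) (hM : ∀ y, |h y| ≤ M)
    (hh0 : ∀ᶠ y in 𝓝 0, h y = y) :
    ∃ C, ∀ x q, -1 < x → |q| ≤ K → ε * |x| < 1 + q * x →
      |x * (1 + q * x) ^ (-p) - h x| ≤ C * levyBound p x := by
  obtain ⟨δ, hδ, hδ1, hKδ, hδh⟩ := exists_scale_of_eventually_eq_id hK hh0
  obtain ⟨L, hL0, hL⟩ := exists_abs_one_add_rpow_sub_one_le (-p)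
  obtain ⟨B, hB, hBx⟩ := exists_abs_deriv_integrand_le_of_lt_abs (p := p) hε hδ hK hM
  refine ⟨L * K + B / δ ^ 2, fun x q hx hq hqx =>
    le_mul_levyBound hδ hδ1 (by positivity) hB (fun hxδ => ?_) (hBx x q hx · hq hqx)⟩
  rw [hδh x hxδ, ← mul_sub_one, abs_mul]
  calc _ ≤ |x| * (L * |q * x|) := by
        gcongr; exact hL _ (abs_mul_le_of_abs_le hK hq hxδ hKδ)
    _ = L * |q| * |x| ^ 2 := by rw [abs_mul]; ring
    _ ≤ L * K * x ^ 2 := by rw [sq_abs]; gcongr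

end Bounds

-- `1 + q * x - ε * |x| = 1 + (q ∓ ε) * x`, and `q ∓ ε` lies between `π - 2 * ε` and `π + 2 * ε`.
lemma mul_abs_lt_one_add_mul {π ε q x : ℝ} (hlo : 0 < 1 + (π - 2 * ε) * x)
    (hhi : 0 < 1 + (π + 2 * ε) * x) (hq : |q - π| < ε) : ε * |x| < 1 + q * x := by
  have hqx : -(ε * |x|) ≤ (q - π) * x := by
    have := (abs_mul (q - π) x).trans_le (mul_le_mul_of_nonneg_right hq.le (abs_nonneg x))
    linarith [neg_abs_le ((q - π) * x)]
  rcases le_or_gt 0 x with hx | hx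
  · rw [abs_of_nonneg hx] at hqx ⊢; nlinarith
  · rw [abs_of_neg hx] at hqx ⊢; nlinarith

lemma exists_ae_mul_abs_lt_one_add_mul {F : Measure ℝ} {π : ℝ}
    (hπ : π ∈ interior {π : ℝ | F {x | 1 + π * x ≤ 0} = 0}) :
    ∃ ε > 0, ∀ᵐ x ∂F, ∀ q ∈ Metric.ball π ε, ε * |x| < 1 + q * x := by
  obtain ⟨ε₀, hε₀, hball⟩ := Metric.mem_nhds_iff.mp (mem_interior_iff_mem_nhds.mp hπ)
  have hpos : ∀ s, |s - π| < ε₀ → ∀ᵐ x ∂F, 0 < 1 + s * x := fun s hs =>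
    (measure_eq_zero_iff_ae_notMem.mp (hball (by rwa [Metric.mem_ball, Real.dist_eq]))).mono
      fun x hx => not_le.mp hx
  refine ⟨ε₀ / 3, by positivity, ?_⟩
  filter_upwards [hpos (π - 2 * (ε₀ / 3)) (by rw [abs_lt]; constructor <;> linarith),
    hpos (π + 2 * (ε₀ / 3)) (by rw [abs_lt]; constructor <;> linarith)] with x hlo hhi q hq
  exact mul_abs_lt_one_add_mul hlo hhi (by rwa [Metric.mem_ball, Real.dist_eq] at hq)

lemma integrable_levyBound {p : ℝ} {F : Measure ℝ}
    (hFlevy : ∫⁻ x, ENNReal.ofReal (min (x ^ 2) 1) ∂F ≠ ∞)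
    (hFint : IntegrableOn (fun x => (1 + x) ^ (1 - p)) (Ioi (1 : ℝ)) F) :
    Integrable (levyBound p) F :=
  ((lintegral_ofReal_ne_top_iff_integrable (by fun_prop)
    (ae_of_all _ fun x => le_min (sq_nonneg x) zero_le_one)).mp hFlevy).add
    (hFint.integrable_indicator measurableSet_Ioi)

lemma hasDerivAt_quadratic (p b c π : ℝ) :
    HasDerivAt (fun π => π * b - p * π ^ 2 * c / 2) (b - p * π * c) π := by
  refine (((hasDerivAt_id π).mul_const b).sub
    ((((hasDerivAt_pow 2 π).const_mul p).mul_const c).div_const 2)).congr_deriv ?_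
  simp only [one_mul]; push_cast; ring

theorem stmt1_general (p b c : ℝ) (hp1 : p ≠ 1)
    (F : Measure ℝ)
    (hFlevy : ∫⁻ x, ENNReal.ofReal (min (x ^ 2) 1) ∂F ≠ ∞)
    (hFint : IntegrableOn (fun x => (1 + x) ^ (1 - p)) (Ioi (1 : ℝ)) F)
    (h : ℝ → ℝ) (hhC1 : ContDiff ℝ 1 h)
    (hhbdd : ∃ M, ∀ x, |h x| ≤ M)
    (hh0 : ∀ᶠ x in 𝓝 (0 : ℝ), h x = x) :
    ∀ π ∈ interior {π : ℝ | F {x | 1 + π * x ≤ 0} = 0},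
      IntegrableOn (fun x => x * (1 + π * x) ^ (-p) - h x) (Ioi (-1 : ℝ)) F ∧
      HasDerivAt
        (fun π => π * b - p * π ^ 2 * c / 2 +
          ∫ x in Ioi (-1 : ℝ), (((1 + π * x) ^ (1 - p) - 1) / (1 - p) - π * h x) ∂F)
        (b - p * π * c + ∫ x in Ioi (-1 : ℝ), (x * (1 + π * x) ^ (-p) - h x) ∂F) π := by
  intro π hπ
  obtain ⟨M, hM⟩ := hhbdd
  obtain ⟨ε, hε, hF⟩ := exists_ae_mul_abs_lt_one_add_mul hπ
  have hK : ∀ q ∈ Metric.ball π ε, |q| ≤ |π| + ε := fun q hq => by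
    rw [Metric.mem_ball, Real.dist_eq] at hq
    linarith [abs_sub_abs_le_abs_sub q π]
  have hK0 : 0 ≤ |π| + ε := by positivity
  obtain ⟨C₀, hC₀⟩ := exists_abs_integrand_le hp1 hε hK0 hM hh0
  obtain ⟨C₁, hC₁⟩ := exists_abs_deriv_integrand_le (p := p) hε hK0 hM hh0
  have hμ : ∀ᵐ x ∂F.restrict (Ioi (-1)), ∀ q ∈ Metric.ball π ε,
      -1 < x ∧ |q| ≤ |π| + ε ∧ ε * |x| < 1 + q * x := by
    filter_upwards [ae_restrict_mem measurableSet_Ioi, ae_restrict_of_ae hF] with x hx hxq q hq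
    exact ⟨hx, hK q hq, hxq q hq⟩
  have hg := (integrable_levyBound hFlevy hFint).restrict (s := Ioi (-1))
  have hhm : Measurable h := hhC1.continuous.measurable
  have hint_integrand : Integrable (fun x => ((1 + π * x) ^ (1 - p) - 1) / (1 - p) - π * h x)
      (F.restrict (Ioi (-1))) :=
    (hg.const_mul C₀).mono' (by fun_prop) (hμ.mono fun x hx => by
      obtain ⟨hx1, hq, hqx⟩ := hx π (Metric.mem_ball_self hε)
      exact hC₀ x π hx1 hq hqx)
  obtain ⟨hint_deriv, hderiv⟩ := hasDerivAt_integral_of_dominated_loc_of_deriv_le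
    (Metric.ball_mem_nhds π hε) (Eventually.of_forall fun q => by fun_prop) hint_integrand
    (by fun_prop)
    (hμ.mono fun x hx q hq => hC₁ x q (hx q hq).1 (hx q hq).2.1 (hx q hq).2.2)
    (hg.const_mul C₁)
    (hμ.mono fun x hx q hq => hasDerivAt_rpow_integrand hp1
      ((mul_nonneg hε.le (abs_nonneg x)).trans_lt (hx q hq).2.2) (h x))
  exact ⟨hint_deriv, (hasDerivAt_quadratic p b c π).add hderiv⟩

theorem stmt1 (p b c : ℝ) (hp : 0 < p) (hp1 : p ≠ 1) (hc : 0 ≤ c)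
    (F : Measure ℝ)
    (hF0 : F {0} = 0)
    (hFlevy : ∫⁻ x, ENNReal.ofReal (min (x ^ 2) 1) ∂F ≠ ∞)
    (hFneg : F (Iic (-1 : ℝ)) = 0)
    (hFint : IntegrableOn (fun x => (1 + x) ^ (1 - p)) (Ioi (1 : ℝ)) F)
    (h : ℝ → ℝ) (hhC1 : ContDiff ℝ 1 h)
    (hhbdd : ∃ M, ∀ x, |h x| ≤ M)
    (hh0 : ∀ᶠ x in 𝓝 (0 : ℝ), h x = x)
    (hhcpt : ∃ R > 0, ∀ x, R < |x| → h x = 0) :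
    ∀ π ∈ interior {π : ℝ | F {x | 1 + π * x ≤ 0} = 0},
      IntegrableOn (fun x => x * (1 + π * x) ^ (-p) - h x) (Ioi (-1 : ℝ)) F ∧
      HasDerivAt
        (fun π => π * b - p * π ^ 2 * c / 2 +
          ∫ x in Ioi (-1 : ℝ), (((1 + π * x) ^ (1 - p) - 1) / (1 - p) - π * h x) ∂F)
        (b - p * π * c + ∫ x in Ioi (-1 : ℝ), (x * (1 + π * x) ^ (-p) - h x) ∂F) π :=
  stmt1_general p b c hp1 F hFlevy hFint h hhC1 hhbdd hh0
end

section
/- Let b ∈ ℝ, c ≥ 0, let F be a Lévy measure on ℝ with F((−∞,−1]) = 0 and ∫_{(1,∞)} log(1+x) dF(x) < ∞, and let h be a truncation function. Then for every π in the interior of A = {π ∈ ℝ : F({x : 1 + πx ≤ 0}) = 0}, the function x ↦ log(1+πx) − π h(x) is F-integrable, the function g(π) := πb − π²c/2 + ∫_{(−1,∞)} (log(1+πx) − π h(x)) dF(x) is finite, continuous and concave on the interior of A, and g is differentiable there with g′(π) = b − πc + ∫_{(−1,∞)} (x/(1+πx) − h(x)) dF(x), the integrand being F-integrable. -/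
open MeasureTheory Set Filter
open scoped ENNReal Topology

/-!
Near an interior point `π` of `A` pick `r > 0` with `π ± 2r ∈ A`. Since `1 + p x` is affine in
`p`, for `F`-a.e. `x` and all `p` with `|p - π| ≤ r` one gets `1 + p x ≥ r |x|`, and together
with `1 + p x ≥ 1 - (|π| + r) |x|` this gives a uniform margin `1 + p x ≥ κ (1 + |x|)`. With that
margin, `log (1 + p x) - p h(x)` is dominated by `C min(x², 1) + 1_{x > 1} log (1 + x)` (the
second-order bound `|log y - (y - 1)| ≤ (y - 1)² / y` near `0`, where `h(x) = x`) and its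
`p`-derivative `x / (1 + p x) - h(x)` by `C min(x², 1)`. Both majorants are `F`-integrable, so the
integral may be differentiated under the integral sign; continuity follows. Concavity is the
pointwise concavity of `p ↦ log (1 + p x)` integrated, plus that of the quadratic term (`c ≥ 0`).
-/

theorem abs_log_sub_sub_one_le {y : ℝ} (hy : 0 < y) :
    |Real.log y - (y - 1)| ≤ (y - 1) ^ 2 / y := by
  have hlow : 1 - y⁻¹ ≤ Real.log y := Real.one_sub_inv_le_log_of_pos hy
  have hup : Real.log y ≤ y - 1 := Real.log_le_sub_one_of_pos hy
  have hsq : (y - 1) ^ 2 / y = (y - 1) - (1 - y⁻¹) := by field_simp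
  rw [abs_sub_comm, abs_of_nonneg (by linarith), hsq]
  linarith

theorem le_mul_min_sq_one {δ a b x y : ℝ} (hδ0 : 0 < δ) (hδ1 : δ ≤ 1) (ha : 0 ≤ a) (hb : 0 ≤ b)
    (hsmall : |x| < δ → y ≤ a * x ^ 2) (hlarge : δ ≤ |x| → y ≤ b) :
    y ≤ (a + b / δ ^ 2) * min (x ^ 2) 1 := by
  have hbδ : 0 ≤ b / δ ^ 2 := by positivity
  rcases lt_or_ge |x| δ with hx | hx
  · have hx2 : x ^ 2 ≤ 1 := by nlinarith [sq_abs x, abs_nonneg x]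
    rw [min_eq_left hx2]
    nlinarith [hsmall hx, sq_nonneg x]
  · have hδx : δ ^ 2 ≤ min (x ^ 2) 1 := le_min (by nlinarith [sq_abs x]) (by nlinarith)
    have hb' : b ≤ b / δ ^ 2 * min (x ^ 2) 1 := by
      calc b = b / δ ^ 2 * δ ^ 2 := by field_simp
        _ ≤ b / δ ^ 2 * min (x ^ 2) 1 := mul_le_mul_of_nonneg_left hδx hbδ
    nlinarith [hlarge hx, le_min (sq_nonneg x) zero_le_one]

theorem mul_one_add_abs_le_one_add_mul {a b p r B x : ℝ} (hr : 0 < r) (hB : |p| ≤ B)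
    (ha : a ≤ p - r) (hb : p + r ≤ b) (hxa : 0 < 1 + a * x) (hxb : 0 < 1 + b * x) :
    r / (1 + B + r) * (1 + |x|) ≤ 1 + p * x := by
  have hB0 : 0 ≤ B := (abs_nonneg p).trans hB
  have hfar : r * |x| ≤ 1 + p * x := by
    rcases le_or_gt 0 x with hx | hx
    · rw [abs_of_nonneg hx]; nlinarith
    · rw [abs_of_neg hx]; nlinarith
  have hnear : 1 - B * |x| ≤ 1 + p * x := by
    have : -(p * x) ≤ B * |x| := by
      calc -(p * x) ≤ |p * x| := neg_le_abs _
        _ = |p| * |x| := abs_mul p x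
        _ ≤ B * |x| := mul_le_mul_of_nonneg_right hB (abs_nonneg x)
    linarith
  -- the convex combination of `hfar` and `hnear` in which the `|x|` terms balance
  rw [div_mul_eq_mul_div, div_le_iff₀ (by positivity)]
  nlinarith [mul_le_mul_of_nonneg_left hfar (by positivity : (0:ℝ) ≤ 1 + B),
    mul_le_mul_of_nonneg_left hnear hr.le]

theorem combo_one_add_mul (p q a b x : ℝ) (hab : a + b = 1) :
    a * (1 + p * x) + b * (1 + q * x) = 1 + (a * p + b * q) * x := by
  linear_combination hab

section IntegrandBounds

variable {h : ℝ → ℝ} {M δ p B κ x : ℝ}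

theorem abs_div_one_add_mul_sub_le (hM : |h x| ≤ M) (hδ0 : 0 < δ) (hδ1 : δ ≤ 1)
    (hδ : |x| < δ → h x = x) (hpB : |p| ≤ B) (hκ : 0 < κ) (hx : κ * (1 + |x|) ≤ 1 + p * x) :
    |x / (1 + p * x) - h x| ≤ (B / κ + (1 / κ + M) / δ ^ 2) * min (x ^ 2) 1 := by
  have hκ1 : κ ≤ 1 + p * x := by nlinarith [abs_nonneg x]
  have hpos : 0 < 1 + p * x := hκ.trans_le hκ1
  refine le_mul_min_sq_one hδ0 hδ1 (by positivity [(abs_nonneg p).trans hpB])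
    (by positivity [(abs_nonneg (h x)).trans hM]) (fun hxδ => ?_) (fun _ => ?_)
  · have hB0 : 0 ≤ B := (abs_nonneg p).trans hpB
    have hne := hpos.ne'
    rw [hδ hxδ, show x / (1 + p * x) - x = -(p * x ^ 2) / (1 + p * x) by
        rw [eq_div_iff hne, sub_mul, div_mul_cancel₀ _ hne]; ring,
      abs_div, abs_neg, abs_mul, abs_of_nonneg (sq_nonneg x), abs_of_pos hpos,
      div_le_iff₀ hpos]
    calc |p| * x ^ 2 ≤ B * x ^ 2 := mul_le_mul_of_nonneg_right hpB (sq_nonneg x)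
      _ = B / κ * x ^ 2 * κ := by field_simp
      _ ≤ B / κ * x ^ 2 * (1 + p * x) := by gcongr
  · have hdiv : |x / (1 + p * x)| ≤ 1 / κ := by
      rw [abs_div, abs_of_pos hpos, div_le_div_iff₀ hpos hκ]
      nlinarith
    calc |x / (1 + p * x) - h x| ≤ |x / (1 + p * x)| + |h x| := abs_sub _ _
      _ ≤ 1 / κ + M := add_le_add hdiv hM

theorem abs_log_one_add_mul_le (hpB : |p| ≤ B) (hκ : 0 < κ) (hx : κ * (1 + |x|) ≤ 1 + p * x) :
    |Real.log (1 + p * x)| ≤ |Real.log κ| + Real.log (1 + B) + Real.log (1 + |x|) := by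
  have hB0 : 0 ≤ B := (abs_nonneg p).trans hpB
  have hpos : 0 < 1 + p * x := lt_of_lt_of_le (by positivity) hx
  have hlow : Real.log κ + Real.log (1 + |x|) ≤ Real.log (1 + p * x) := by
    rw [← Real.log_mul hκ.ne' (by positivity)]
    exact Real.log_le_log (by positivity) hx
  have hup : Real.log (1 + p * x) ≤ Real.log (1 + B) + Real.log (1 + |x|) := by
    rw [← Real.log_mul (by positivity) (by positivity)]
    refine Real.log_le_log hpos ?_
    nlinarith [le_abs_self (p * x), abs_mul p x, mul_le_mul_of_nonneg_right hpB (abs_nonneg x),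
      abs_nonneg x]
  have hlogB : 0 ≤ Real.log (1 + B) := Real.log_nonneg (by linarith)
  have hlogx : 0 ≤ Real.log (1 + |x|) := Real.log_nonneg (by linarith [abs_nonneg x])
  rw [abs_le]
  constructor <;> linarith [neg_abs_le (Real.log κ), abs_nonneg (Real.log κ)]

theorem log_one_add_abs_le (hx : -1 < x) :
    Real.log (1 + |x|) ≤ Real.log 2 + (Ioi 1).indicator (fun x => Real.log (1 + x)) x := by
  by_cases hx1 : 1 < x
  · rw [indicator_of_mem (mem_Ioi.mpr hx1), abs_of_pos (by linarith)]
    linarith [Real.log_nonneg (by norm_num : (1:ℝ) ≤ 2)]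
  · rw [indicator_of_notMem (notMem_Ioi.mpr (not_lt.mp hx1)), add_zero]
    refine Real.log_le_log (by positivity) ?_
    linarith [abs_le.mpr ⟨hx.le, not_lt.mp hx1⟩]

theorem abs_log_one_add_mul_sub_le (hM : |h x| ≤ M) (hδ0 : 0 < δ) (hδ1 : δ ≤ 1)
    (hδ : |x| < δ → h x = x) (hpB : |p| ≤ B) (hκ : 0 < κ) (hx : κ * (1 + |x|) ≤ 1 + p * x)
    (hx1 : -1 < x) :
    |Real.log (1 + p * x) - p * h x| ≤
      (B ^ 2 / κ + (|Real.log κ| + Real.log (1 + B) + Real.log 2 + B * M) / δ ^ 2)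
        * min (x ^ 2) 1 + (Ioi 1).indicator (fun x => Real.log (1 + x)) x := by
  have hB0 : 0 ≤ B := (abs_nonneg p).trans hpB
  have hM0 : 0 ≤ M := (abs_nonneg (h x)).trans hM
  have hκ1 : κ ≤ 1 + p * x := by nlinarith [abs_nonneg x]
  have hpos : 0 < 1 + p * x := hκ.trans_le hκ1
  have hind : 0 ≤ (Ioi 1).indicator (fun x => Real.log (1 + x)) x :=
    indicator_nonneg (fun y hy => Real.log_nonneg (by linarith [mem_Ioi.mp hy])) x
  rw [← sub_le_iff_le_add]
  refine le_mul_min_sq_one hδ0 hδ1 (by positivity)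
    (by positivity [Real.log_nonneg (by linarith : (1:ℝ) ≤ 1 + B),
      Real.log_nonneg (by norm_num : (1:ℝ) ≤ 2)]) (fun hxδ => ?_) (fun _ => ?_)
  · have hlog := abs_log_sub_sub_one_le hpos
    rw [add_sub_cancel_left] at hlog
    have hsq : (p * x) ^ 2 ≤ B ^ 2 * x ^ 2 := by
      rw [mul_pow, ← sq_abs p]
      gcongr
    calc |Real.log (1 + p * x) - p * h x| - _ ≤ |Real.log (1 + p * x) - p * x| := by
          rw [hδ hxδ]; linarith
      _ ≤ (p * x) ^ 2 / (1 + p * x) := hlog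
      _ ≤ B ^ 2 * x ^ 2 / κ := div_le_div₀ (by positivity) hsq hκ hκ1
      _ = B ^ 2 / κ * x ^ 2 := by ring
  · have hph : |p * h x| ≤ B * M := by
      rw [abs_mul]; exact mul_le_mul hpB hM (abs_nonneg _) hB0
    linarith [abs_sub (Real.log (1 + p * x)) (p * h x), abs_log_one_add_mul_le hpB hκ hx,
      log_one_add_abs_le hx1]

end IntegrandBounds

theorem concaveOn_log_one_add_mul_sub (x t : ℝ) :
    ConcaveOn ℝ {q | 0 < 1 + q * x} (fun q => Real.log (1 + q * x) - q * t) := by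
  refine ⟨fun p hp q hq a b ha hb hab => ?_, fun p hp q hq a b ha hb hab => ?_⟩
  · simp only [mem_ofPred_eq, smul_eq_mul] at hp hq ⊢
    rw [← combo_one_add_mul p q a b x hab]
    exact convex_Ioi (0:ℝ) hp hq ha hb hab
  · have hlog := strictConcaveOn_log_Ioi.concaveOn.2 (mem_Ioi.mpr hp) (mem_Ioi.mpr hq) ha hb hab
    simp only [smul_eq_mul, combo_one_add_mul p q a b x hab] at hlog ⊢
    linarith

theorem hasDerivAt_log_one_add_mul_sub {p x : ℝ} (t : ℝ) (hpos : 0 < 1 + p * x) :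
    HasDerivAt (fun q => Real.log (1 + q * x) - q * t) (x / (1 + p * x) - t) p := by
  have hlin : HasDerivAt (fun q : ℝ => 1 + q * x) x p := (hasDerivAt_mul_const x).const_add 1
  exact (hlin.log hpos.ne').sub (hasDerivAt_mul_const t)

theorem concaveOn_integral_of_ae_segment {α E : Type*} [MeasurableSpace α] [AddCommGroup E] [Module ℝ E]
    {μ : Measure α} {s : Set E} {f : E → α → ℝ} (hs : Convex ℝ s)
    (hint : ∀ p ∈ s, Integrable (f p) μ)
    (hf : ∀ p ∈ s, ∀ q ∈ s, ∀ᵐ x ∂μ, ConcaveOn ℝ (segment ℝ p q) (f · x)) :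
    ConcaveOn ℝ s (fun p => ∫ x, f p x ∂μ) := by
  refine ⟨hs, fun p hp q hq a b ha hb hab => ?_⟩
  have hae : ∀ᵐ x ∂μ, a • f p x + b • f q x ≤ f (a • p + b • q) x := by
    filter_upwards [hf p hp q hq] with x hx
    exact hx.2 (left_mem_segment ℝ p q) (right_mem_segment ℝ p q) ha hb hab
  have hfp := (hint p hp).const_mul a
  have hfq := (hint q hq).const_mul b
  simp only [smul_eq_mul] at hae ⊢
  calc a * ∫ x, f p x ∂μ + b * ∫ x, f q x ∂μ = ∫ x, (a * f p x + b * f q x) ∂μ := by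
        rw [integral_add hfp hfq, integral_const_mul, integral_const_mul]
    _ ≤ ∫ x, f (a • p + b • q) x ∂μ :=
        integral_mono_ae (hfp.add hfq) (hint _ (hs hp hq ha hb hab)) hae

theorem concaveOn_mul_sub_sq_mul_div_two (b : ℝ) {c : ℝ} (hc : 0 ≤ c) :
    ConcaveOn ℝ univ (fun π : ℝ => π * b - π ^ 2 * c / 2) := by
  refine ⟨convex_univ, fun p _ q _ s t hs ht hst => ?_⟩
  obtain rfl : t = 1 - s := by linarith
  simp only [smul_eq_mul]
  nlinarith [mul_nonneg (mul_nonneg (mul_nonneg hs ht) hc) (sq_nonneg (p - q))]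

theorem hasDerivAt_mul_sub_sq_mul_div_two (b c π : ℝ) :
    HasDerivAt (fun π : ℝ => π * b - π ^ 2 * c / 2) (b - π * c) π := by
  refine ((hasDerivAt_mul_const b).sub
    (((hasDerivAt_pow 2 π).mul_const c).div_const 2)).congr_deriv ?_
  push_cast; ring

def admissibleSet (F : Measure ℝ) : Set ℝ := {π | F {x | 1 + π * x ≤ 0} = 0}

section Admissible

variable {F : Measure ℝ}

theorem mem_admissibleSet_iff {π : ℝ} : π ∈ admissibleSet F ↔ ∀ᵐ x ∂F, 0 < 1 + π * x := by
  simp only [admissibleSet, mem_ofPred_eq, measure_eq_zero_iff_ae_notMem, not_le]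

theorem convex_admissibleSet : Convex ℝ (admissibleSet F) := by
  intro p hp q hq a b ha hb hab
  rw [mem_admissibleSet_iff] at hp hq ⊢
  filter_upwards [hp, hq] with x hpx hqx
  rw [smul_eq_mul, smul_eq_mul, ← combo_one_add_mul p q a b x hab]
  exact convex_Ioi (0:ℝ) hpx hqx ha hb hab

theorem exists_ae_mul_one_add_abs_le {π : ℝ} (hπ : π ∈ interior (admissibleSet F)) :
    ∃ r > 0, ∃ κ > 0, ∀ᵐ x ∂F, ∀ p ∈ Metric.closedBall π r, κ * (1 + |x|) ≤ 1 + p * x := by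
  obtain ⟨ε, hε, hball⟩ := Metric.mem_nhds_iff.mp (mem_interior_iff_mem_nhds.mp hπ)
  obtain ⟨r, hr, hrε⟩ : ∃ r > 0, 2 * r < ε := ⟨ε / 3, by positivity, by linarith⟩
  have hmem : ∀ s, |s| ≤ 2 * r → π + s ∈ admissibleSet F := fun s hs =>
    hball (by rw [Metric.mem_ball, Real.dist_eq, add_sub_cancel_left]; linarith)
  have hlo := mem_admissibleSet_iff.mp
    (hmem (-(2 * r)) (by rw [abs_neg, abs_of_pos (by positivity)]))
  have hhi := mem_admissibleSet_iff.mp (hmem (2 * r) (abs_of_pos (by positivity)).le)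
  refine ⟨r, hr, r / (1 + (|π| + r) + r), by positivity, ?_⟩
  filter_upwards [hlo, hhi] with x hxlo hxhi p hp
  have hpπ := abs_le.mp (Real.dist_eq p π ▸ Metric.mem_closedBall.mp hp)
  exact mul_one_add_abs_le_one_add_mul hr (norm_le_of_mem_closedBall hp) (by linarith)
    (by linarith) hxlo hxhi

end Admissible

section Integrals

variable {F : Measure ℝ} {h : ℝ → ℝ} {M δ π : ℝ}

theorem integrable_min_sq_one (hF : ∫⁻ x, ENNReal.ofReal (min (x ^ 2) 1) ∂F ≠ ∞) :
    Integrable (fun x => min (x ^ 2) 1) F := by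
  refine ⟨by fun_prop, ?_⟩
  rw [hasFiniteIntegral_iff_ofReal (Eventually.of_forall fun x =>
    le_min (sq_nonneg x) zero_le_one)]
  exact hF.lt_top

theorem integrableOn_log_one_add_mul_sub (hF : ∫⁻ x, ENNReal.ofReal (min (x ^ 2) 1) ∂F ≠ ∞)
    (hFint : IntegrableOn (fun x => Real.log (1 + x)) (Ioi 1) F) (hh : Measurable h)
    (hM : ∀ x, |h x| ≤ M) (hδ0 : 0 < δ) (hδ1 : δ ≤ 1) (hδ : ∀ x, |x| < δ → h x = x)
    (hπ : π ∈ interior (admissibleSet F)) :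
    IntegrableOn (fun x => Real.log (1 + π * x) - π * h x) (Ioi (-1)) F := by
  obtain ⟨r, hr, κ, hκ, hae⟩ := exists_ae_mul_one_add_abs_le hπ
  have hbound := ((integrable_min_sq_one hF).const_mul
    (|π| ^ 2 / κ + (|Real.log κ| + Real.log (1 + |π|) + Real.log 2 + |π| * M) / δ ^ 2)).add
    (hFint.integrable_indicator measurableSet_Ioi)
  refine hbound.integrableOn.mono' (by fun_prop) ?_
  filter_upwards [ae_restrict_mem measurableSet_Ioi, ae_restrict_of_ae hae] with x hx1 hx
  exact abs_log_one_add_mul_sub_le (hM x) hδ0 hδ1 (hδ x)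
    le_rfl hκ (hx π (Metric.mem_closedBall_self hr.le)) hx1

theorem hasDerivAt_integral_log_one_add_mul_sub
    (hF : ∫⁻ x, ENNReal.ofReal (min (x ^ 2) 1) ∂F ≠ ∞)
    (hFint : IntegrableOn (fun x => Real.log (1 + x)) (Ioi 1) F) (hh : Measurable h)
    (hM : ∀ x, |h x| ≤ M) (hδ0 : 0 < δ) (hδ1 : δ ≤ 1) (hδ : ∀ x, |x| < δ → h x = x)
    (hπ : π ∈ interior (admissibleSet F)) :
    IntegrableOn (fun x => x / (1 + π * x) - h x) (Ioi (-1)) F ∧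
      HasDerivAt (fun p => ∫ x in Ioi (-1), (Real.log (1 + p * x) - p * h x) ∂F)
        (∫ x in Ioi (-1), (x / (1 + π * x) - h x) ∂F) π := by
  obtain ⟨r, hr, κ, hκ, hae⟩ := exists_ae_mul_one_add_abs_le hπ
  have hpos : ∀ᵐ x ∂F.restrict (Ioi (-1)), ∀ p ∈ Metric.ball π r, 0 < 1 + p * x := by
    filter_upwards [ae_restrict_of_ae hae] with x hx p hp
    exact lt_of_lt_of_le (by positivity) (hx p (Metric.ball_subset_closedBall hp))
  refine hasDerivAt_integral_of_dominated_loc_of_deriv_le (μ := F.restrict (Ioi (-1)))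
    (F := fun p x => Real.log (1 + p * x) - p * h x) (F' := fun p x => x / (1 + p * x) - h x)
    (Metric.ball_mem_nhds π hr)
    (Eventually.of_forall fun p => by fun_prop)
    (integrableOn_log_one_add_mul_sub hF hFint hh hM hδ0 hδ1 hδ hπ) (by fun_prop)
    (bound := fun x => ((|π| + r) / κ + (1 / κ + M) / δ ^ 2) * min (x ^ 2) 1) ?_
    ((integrable_min_sq_one hF).const_mul _).integrableOn ?_
  · filter_upwards [ae_restrict_of_ae hae] with x hx p hp
    have hp' := Metric.ball_subset_closedBall hp
    exact abs_div_one_add_mul_sub_le (hM x) hδ0 hδ1 (hδ x) (norm_le_of_mem_closedBall hp') hκ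
      (hx p hp')
  · filter_upwards [hpos] with x hx p hp
    exact hasDerivAt_log_one_add_mul_sub (h x) (hx p hp)

theorem concaveOn_integral_log_one_add_mul_sub
    (hF : ∫⁻ x, ENNReal.ofReal (min (x ^ 2) 1) ∂F ≠ ∞)
    (hFint : IntegrableOn (fun x => Real.log (1 + x)) (Ioi 1) F) (hh : Measurable h)
    (hM : ∀ x, |h x| ≤ M) (hδ0 : 0 < δ) (hδ1 : δ ≤ 1) (hδ : ∀ x, |x| < δ → h x = x) :
    ConcaveOn ℝ (interior (admissibleSet F))
      (fun π => ∫ x in Ioi (-1), (Real.log (1 + π * x) - π * h x) ∂F) := by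
  refine concaveOn_integral_of_ae_segment convex_admissibleSet.interior
    (fun p hp => integrableOn_log_one_add_mul_sub hF hFint hh hM hδ0 hδ1 hδ hp)
    fun p hp q hq => ?_
  filter_upwards [ae_restrict_of_ae (mem_admissibleSet_iff.mp (interior_subset hp)),
    ae_restrict_of_ae (mem_admissibleSet_iff.mp (interior_subset hq))] with x hpx hqx
  have hconc := concaveOn_log_one_add_mul_sub x (h x)
  exact hconc.subset (hconc.1.segment_subset hpx hqx) (convex_segment p q)

end Integrals

theorem stmt2_general (b c : ℝ) (hc : 0 ≤ c)
    (F : Measure ℝ)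
    (hFlevy : ∫⁻ x, ENNReal.ofReal (min (x ^ 2) 1) ∂F ≠ ∞)
    (hFint : IntegrableOn (fun x => Real.log (1 + x)) (Ioi (1 : ℝ)) F)
    (h : ℝ → ℝ) (hhC1 : ContDiff ℝ 1 h)
    (hhbdd : ∃ M, ∀ x, |h x| ≤ M)
    (hh0 : ∀ᶠ x in 𝓝 (0 : ℝ), h x = x) :
    (∀ π ∈ interior {π : ℝ | F {x | 1 + π * x ≤ 0} = 0},
      IntegrableOn (fun x => Real.log (1 + π * x) - π * h x) (Ioi (-1 : ℝ)) F) ∧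
    ContinuousOn
      (fun π => π * b - π ^ 2 * c / 2 +
        ∫ x in Ioi (-1 : ℝ), (Real.log (1 + π * x) - π * h x) ∂F)
      (interior {π : ℝ | F {x | 1 + π * x ≤ 0} = 0}) ∧
    ConcaveOn ℝ (interior {π : ℝ | F {x | 1 + π * x ≤ 0} = 0})
      (fun π => π * b - π ^ 2 * c / 2 +
        ∫ x in Ioi (-1 : ℝ), (Real.log (1 + π * x) - π * h x) ∂F) ∧
    ∀ π ∈ interior {π : ℝ | F {x | 1 + π * x ≤ 0} = 0},
      IntegrableOn (fun x => x / (1 + π * x) - h x) (Ioi (-1 : ℝ)) F ∧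
      HasDerivAt
        (fun π => π * b - π ^ 2 * c / 2 +
          ∫ x in Ioi (-1 : ℝ), (Real.log (1 + π * x) - π * h x) ∂F)
        (b - π * c + ∫ x in Ioi (-1 : ℝ), (x / (1 + π * x) - h x) ∂F) π := by
  obtain ⟨M, hM⟩ := hhbdd
  obtain ⟨δ, hδ0, hδ1, hδ⟩ : ∃ δ, 0 < δ ∧ δ ≤ 1 ∧ ∀ x, |x| < δ → h x = x := by
    obtain ⟨ε, hε, hεh⟩ := Metric.eventually_nhds_iff.mp hh0
    exact ⟨min ε 1, lt_min hε one_pos, min_le_right ε 1, fun x hx =>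
      hεh (by simpa [Real.dist_eq] using lt_of_lt_of_le hx (min_le_left ε 1))⟩
  have hh : Measurable h := hhC1.continuous.measurable
  have hderiv : ∀ π ∈ interior (admissibleSet F),
      IntegrableOn (fun x => x / (1 + π * x) - h x) (Ioi (-1)) F ∧
      HasDerivAt (fun π => π * b - π ^ 2 * c / 2 +
          ∫ x in Ioi (-1), (Real.log (1 + π * x) - π * h x) ∂F)
        (b - π * c + ∫ x in Ioi (-1), (x / (1 + π * x) - h x) ∂F) π := fun π hπ =>
    have hI := hasDerivAt_integral_log_one_add_mul_sub hFlevy hFint hh hM hδ0 hδ1 hδ hπ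
    ⟨hI.1, (hasDerivAt_mul_sub_sq_mul_div_two b c π).add hI.2⟩
  refine ⟨fun π hπ => integrableOn_log_one_add_mul_sub hFlevy hFint hh hM hδ0 hδ1 hδ hπ,
    HasDerivAt.continuousOn fun π hπ => (hderiv π hπ).2, ?_, hderiv⟩
  exact ((concaveOn_mul_sub_sq_mul_div_two b hc).subset (subset_univ _)
    convex_admissibleSet.interior).add
    (concaveOn_integral_log_one_add_mul_sub hFlevy hFint hh hM hδ0 hδ1 hδ)

theorem stmt2 (b c : ℝ) (hc : 0 ≤ c)
    (F : Measure ℝ)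
    (hF0 : F {0} = 0)
    (hFlevy : ∫⁻ x, ENNReal.ofReal (min (x ^ 2) 1) ∂F ≠ ∞)
    (hFneg : F (Iic (-1 : ℝ)) = 0)
    (hFint : IntegrableOn (fun x => Real.log (1 + x)) (Ioi (1 : ℝ)) F)
    (h : ℝ → ℝ) (hhC1 : ContDiff ℝ 1 h)
    (hhbdd : ∃ M, ∀ x, |h x| ≤ M)
    (hh0 : ∀ᶠ x in 𝓝 (0 : ℝ), h x = x)
    (hhcpt : ∃ R > 0, ∀ x, R < |x| → h x = 0) :
    (∀ π ∈ interior {π : ℝ | F {x | 1 + π * x ≤ 0} = 0},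
      IntegrableOn (fun x => Real.log (1 + π * x) - π * h x) (Ioi (-1 : ℝ)) F) ∧
    ContinuousOn
      (fun π => π * b - π ^ 2 * c / 2 +
        ∫ x in Ioi (-1 : ℝ), (Real.log (1 + π * x) - π * h x) ∂F)
      (interior {π : ℝ | F {x | 1 + π * x ≤ 0} = 0}) ∧
    ConcaveOn ℝ (interior {π : ℝ | F {x | 1 + π * x ≤ 0} = 0})
      (fun π => π * b - π ^ 2 * c / 2 +
        ∫ x in Ioi (-1 : ℝ), (Real.log (1 + π * x) - π * h x) ∂F) ∧
    ∀ π ∈ interior {π : ℝ | F {x | 1 + π * x ≤ 0} = 0},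
      IntegrableOn (fun x => x / (1 + π * x) - h x) (Ioi (-1 : ℝ)) F ∧
      HasDerivAt
        (fun π => π * b - π ^ 2 * c / 2 +
          ∫ x in Ioi (-1 : ℝ), (Real.log (1 + π * x) - π * h x) ∂F)
        (b - π * c + ∫ x in Ioi (-1 : ℝ), (x / (1 + π * x) - h x) ∂F) π :=
  stmt2_general b c hc F hFlevy hFint h hhC1 hhbdd hh0
end

section
/- Let p > 0 with p ≠ 1 and let W be a random variable on a probability space with W > 0 almost surely and E[W^{1−p}] < ∞. Define k(π) := E[((1 + π(W−1))^{1−p} − 1)/(1−p)] for π ∈ [0,1]. Then k is finite and concave on [0,1], and k is differentiable at every π ∈ (0,1) with k′(π) = E[(W−1)(1 + π(W−1))^{−p}], where the random variable (W−1)(1 + π(W−1))^{−p} is integrable for every π ∈ (0,1). -/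
open MeasureTheory Set Filter
open scoped ENNReal Topology

/-! Write the integrand as `U (1 + π (W - 1))` with `U x = (x ^ (1 - p) - 1) / (1 - p)`. Since
`U' x = x ^ (-p)` is antitone, `U` is concave, so `k` is an average of concave functions. The point
`1 + π (W - 1)` lies on the segment `[1, W]`, on which the monotone function `x ↦ x ^ (1 - p)` is
at most `1 + W ^ (1 - p)`; this dominates the integrand. For `π` in `[a, b] ⊆ (0, 1)` we have
`1 + π (W - 1) ≥ max (1 - b) (a W)`, so the `π`-derivative `(W - 1) (1 + π (W - 1)) ^ (-p)` is
dominated by the integrable `a ^ (-p) W ^ (1 - p) + (1 - b) ^ (-p)`, and one may differentiate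
under the integral sign. -/

noncomputable def powerUtility (p x : ℝ) : ℝ := (x ^ (1 - p) - 1) / (1 - p)

lemma measurable_powerUtility (p : ℝ) : Measurable (powerUtility p) := by
  unfold powerUtility; fun_prop

lemma hasDerivAt_powerUtility {p x : ℝ} (hp : p ≠ 1) (hx : 0 < x) :
    HasDerivAt (powerUtility p) (x ^ (-p)) x := by
  have hq : 1 - p ≠ 0 := sub_ne_zero.2 hp.symm
  refine (((Real.hasDerivAt_rpow_const (Or.inl hx.ne')).sub_const 1).div_const _).congr_deriv ?_
  rw [sub_sub_cancel_left]; field_simp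

lemma concaveOn_powerUtility {p : ℝ} (hp : 0 ≤ p) (hp1 : p ≠ 1) :
    ConcaveOn ℝ (Ioi 0) (powerUtility p) := by
  have hderiv : ∀ x ∈ Ioi (0 : ℝ), HasDerivAt (powerUtility p) (x ^ (-p)) x :=
    fun x hx => hasDerivAt_powerUtility hp1 hx
  refine AntitoneOn.concaveOn_of_deriv (convex_Ioi 0)
    (fun x hx => (hderiv x hx).continuousAt.continuousWithinAt) ?_ ?_ <;>
    rw [interior_Ioi]
  · exact fun x hx => (hderiv x hx).differentiableAt.differentiableWithinAt
  · refine (Real.antitoneOn_rpow_Ioi_of_exponent_nonpos (neg_nonpos.2 hp)).congr ?_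
    exact fun x hx => ((hderiv x hx).deriv).symm

lemma Real.quasiconvexOn_rpow (q : ℝ) : QuasiconvexOn ℝ (Ioi 0) fun x : ℝ => x ^ q := by
  rcases le_total 0 q with hq | hq
  · exact ((Real.monotoneOn_rpow_Ici_of_exponent_nonneg hq).mono Ioi_subset_Ici_self).quasiconvexOn
      (convex_Ioi 0)
  · exact (Real.antitoneOn_rpow_Ioi_of_exponent_nonpos hq).quasiconvexOn (convex_Ioi 0)

lemma Real.rpow_le_max_of_mem_segment {x y z : ℝ} (hx : 0 < x) (hy : 0 < y)
    (hz : z ∈ segment ℝ x y) (q : ℝ) : z ^ q ≤ max (x ^ q) (y ^ q) :=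
  ((Real.quasiconvexOn_rpow q _).segment_subset ⟨hx, le_max_left _ _⟩
    ⟨hy, le_max_right _ _⟩ hz).2

lemma lineMap_one_apply (w t : ℝ) : AffineMap.lineMap 1 w t = 1 + t * (w - 1) := by
  rw [AffineMap.lineMap_apply_ring', add_comm]

lemma one_add_mul_sub_one_mem_segment {t : ℝ} (ht : t ∈ Icc 0 1) (w : ℝ) :
    1 + t * (w - 1) ∈ segment ℝ 1 w :=
  lineMap_one_apply w t ▸ lineMap_mem_segment ℝ 1 w ht

lemma one_add_mul_sub_one_pos {t w : ℝ} (ht : t ∈ Icc 0 1) (hw : 0 < w) :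
    0 < 1 + t * (w - 1) :=
  (convex_Ioi 0).segment_subset one_pos hw (one_add_mul_sub_one_mem_segment ht w)

lemma abs_powerUtility_one_add_mul_sub_one_le (p : ℝ) {t w : ℝ} (ht : t ∈ Icc 0 1)
    (hw : 0 < w) : |powerUtility p (1 + t * (w - 1))| ≤ (2 + w ^ (1 - p)) / |1 - p| := by
  have hmax := Real.rpow_le_max_of_mem_segment one_pos hw
    (one_add_mul_sub_one_mem_segment ht w) (1 - p)
  have hpos := Real.rpow_pos_of_pos (one_add_mul_sub_one_pos ht hw) (1 - p)
  rw [Real.one_rpow] at hmax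
  rw [powerUtility, abs_div]
  gcongr
  rw [abs_le]
  constructor <;> linarith [max_le_add_of_nonneg zero_le_one (Real.rpow_pos_of_pos hw (1 - p)).le]

lemma abs_sub_one_mul_rpow_neg_le {p a b x w : ℝ} (hp : 0 ≤ p) (ha : 0 < a) (hb : b < 1)
    (hx : x ∈ Icc a b) (hw : 0 < w) :
    |w - 1| * (1 + x * (w - 1)) ^ (-p) ≤ a ^ (-p) * w ^ (1 - p) + (1 - b) ^ (-p) := by
  obtain ⟨hax, hxb⟩ := hx
  have hy₁ : 1 - b ≤ 1 + x * (w - 1) := by nlinarith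
  have hy₂ : a * w ≤ 1 + x * (w - 1) := by nlinarith
  have h₁ := Real.rpow_le_rpow_of_nonpos (by linarith) hy₁ (neg_nonpos.2 hp)
  have h₂ := Real.rpow_le_rpow_of_nonpos (mul_pos ha hw) hy₂ (neg_nonpos.2 hp)
  have hpow : 0 ≤ (1 + x * (w - 1)) ^ (-p) := Real.rpow_nonneg (by linarith) _
  rw [Real.mul_rpow ha.le hw.le] at h₂
  have hw' : w * w ^ (-p) = w ^ (1 - p) := by
    rw [sub_eq_add_neg, Real.rpow_add hw, Real.rpow_one]
  calc |w - 1| * (1 + x * (w - 1)) ^ (-p)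
      ≤ (w + 1) * (1 + x * (w - 1)) ^ (-p) := by
        gcongr; rw [abs_le]; constructor <;> linarith
    _ = w * (1 + x * (w - 1)) ^ (-p) + (1 + x * (w - 1)) ^ (-p) := by ring
    _ ≤ w * (a ^ (-p) * w ^ (-p)) + (1 - b) ^ (-p) := by gcongr
    _ = a ^ (-p) * w ^ (1 - p) + (1 - b) ^ (-p) := by rw [← hw']; ring

lemma concaveOn_powerUtility_one_add_mul_sub_one {p w : ℝ} (hp : 0 ≤ p) (hp1 : p ≠ 1)
    (hw : 0 < w) : ConcaveOn ℝ (Icc 0 1) fun t => powerUtility p (1 + t * (w - 1)) := by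
  have h := ((concaveOn_powerUtility hp hp1).comp_affineMap (AffineMap.lineMap 1 w)).subset
    (fun t ht => by
      simpa only [mem_preimage, mem_Ioi, lineMap_one_apply] using one_add_mul_sub_one_pos ht hw)
    (convex_Icc 0 1)
  exact h.congr fun t _ => congrArg _ (lineMap_one_apply w t)

lemma hasDerivAt_powerUtility_one_add_mul_sub_one {p t w : ℝ} (hp : p ≠ 1)
    (hpos : 0 < 1 + t * (w - 1)) :
    HasDerivAt (fun t => powerUtility p (1 + t * (w - 1)))
      ((w - 1) * (1 + t * (w - 1)) ^ (-p)) t := by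
  have hlin : HasDerivAt (fun t : ℝ => 1 + t * (w - 1)) (w - 1) t := by
    simpa using (hasDerivAt_mul_const (w - 1)).const_add 1
  exact ((hasDerivAt_powerUtility hp hpos).comp t hlin).congr_deriv (mul_comm _ _)

lemma concaveOn_integral {E Ω : Type*} [AddCommGroup E] [Module ℝ E] [MeasurableSpace Ω]
    {μ : Measure Ω} {s : Set E} {F : E → Ω → ℝ} (hs : Convex ℝ s)
    (hF : ∀ᵐ ω ∂μ, ConcaveOn ℝ s (F · ω)) (hint : ∀ x ∈ s, Integrable (F x) μ) :
    ConcaveOn ℝ s fun x => ∫ ω, F x ω ∂μ := by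
  refine ⟨hs, fun x hx y hy a b ha hb hab => ?_⟩
  simp only [smul_eq_mul]
  rw [← integral_const_mul, ← integral_const_mul,
    ← integral_add ((hint x hx).const_mul a) ((hint y hy).const_mul b)]
  refine integral_mono_ae (((hint x hx).const_mul a).add ((hint y hy).const_mul b))
    (hint _ (hs hx hy ha hb hab)) ?_
  filter_upwards [hF] with ω hω using hω.2 hx hy ha hb hab

section

variable {Ω : Type*} [MeasurableSpace Ω] {μ : Measure Ω} {p : ℝ} {W : Ω → ℝ}

lemma integrable_powerUtility_one_add_mul_sub_one [IsFiniteMeasure μ] (hWmeas : Measurable W)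
    (hWpos : ∀ᵐ ω ∂μ, 0 < W ω) (hWint : Integrable (fun ω => W ω ^ (1 - p)) μ) {t : ℝ}
    (ht : t ∈ Icc 0 1) : Integrable (fun ω => powerUtility p (1 + t * (W ω - 1))) μ := by
  refine Integrable.mono' (((integrable_const 2).add hWint).div_const |1 - p|)
    ((measurable_powerUtility p).comp (by fun_prop)).aestronglyMeasurable ?_
  filter_upwards [hWpos] with ω hω
  exact abs_powerUtility_one_add_mul_sub_one_le p ht hω

lemma hasDerivAt_integral_powerUtility_one_add_mul_sub_one [IsFiniteMeasure μ]
    (hp : 0 ≤ p) (hp1 : p ≠ 1) (hWmeas : Measurable W)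
    (hWpos : ∀ᵐ ω ∂μ, 0 < W ω) (hWint : Integrable (fun ω => W ω ^ (1 - p)) μ) {t : ℝ}
    (ht : t ∈ Ioo 0 1) :
    Integrable (fun ω => (W ω - 1) * (1 + t * (W ω - 1)) ^ (-p)) μ ∧
      HasDerivAt (fun t => ∫ ω, powerUtility p (1 + t * (W ω - 1)) ∂μ)
        (∫ ω, (W ω - 1) * (1 + t * (W ω - 1)) ^ (-p) ∂μ) t := by
  obtain ⟨ht0, ht1⟩ := ht
  have hsub : Icc (t / 2) ((1 + t) / 2) ⊆ Icc 0 1 :=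
    Icc_subset_Icc (by linarith) (by linarith)
  refine hasDerivAt_integral_of_dominated_loc_of_deriv_le
    (F := fun x ω => powerUtility p (1 + x * (W ω - 1)))
    (F' := fun x ω => (W ω - 1) * (1 + x * (W ω - 1)) ^ (-p))
    (bound := fun ω => (t / 2) ^ (-p) * W ω ^ (1 - p) + (1 - (1 + t) / 2) ^ (-p))
    (Icc_mem_nhds (a := t / 2) (b := (1 + t) / 2) (by linarith) (by linarith))
    (Eventually.of_forall fun _ =>
      ((measurable_powerUtility p).comp (by fun_prop)).aestronglyMeasurable)
    (integrable_powerUtility_one_add_mul_sub_one hWmeas hWpos hWint ⟨ht0.le, ht1.le⟩)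
    (by fun_prop : Measurable _).aestronglyMeasurable ?_
    ((hWint.const_mul _).add (integrable_const _)) ?_
  · filter_upwards [hWpos] with ω hω x hx
    rw [Real.norm_eq_abs, abs_mul, abs_of_nonneg
      (Real.rpow_nonneg (one_add_mul_sub_one_pos (hsub hx) hω).le _)]
    exact abs_sub_one_mul_rpow_neg_le hp (by linarith) (by linarith) hx hω
  · filter_upwards [hWpos] with ω hω x hx
    exact hasDerivAt_powerUtility_one_add_mul_sub_one hp1 (one_add_mul_sub_one_pos (hsub hx) hω)

end

theorem stmt3 {Ω : Type*} [MeasurableSpace Ω] (μ : Measure Ω) [IsProbabilityMeasure μ]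
    (p : ℝ) (hp : 0 < p) (hp1 : p ≠ 1)
    (W : Ω → ℝ) (hWmeas : Measurable W)
    (hWpos : ∀ᵐ ω ∂μ, 0 < W ω)
    (hWint : Integrable (fun ω => W ω ^ (1 - p)) μ) :
    (∀ π ∈ Icc (0:ℝ) 1,
      Integrable (fun ω => ((1 + π * (W ω - 1)) ^ (1 - p) - 1) / (1 - p)) μ) ∧
    ConcaveOn ℝ (Icc (0:ℝ) 1)
      (fun π => ∫ ω, ((1 + π * (W ω - 1)) ^ (1 - p) - 1) / (1 - p) ∂μ) ∧
    ∀ π ∈ Ioo (0:ℝ) 1,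
      Integrable (fun ω => (W ω - 1) * (1 + π * (W ω - 1)) ^ (-p)) μ ∧
      HasDerivAt (fun π => ∫ ω, ((1 + π * (W ω - 1)) ^ (1 - p) - 1) / (1 - p) ∂μ)
        (∫ ω, (W ω - 1) * (1 + π * (W ω - 1)) ^ (-p) ∂μ) π := by
  have hint : ∀ π ∈ Icc (0:ℝ) 1,
      Integrable (fun ω => powerUtility p (1 + π * (W ω - 1))) μ :=
    fun π hπ => integrable_powerUtility_one_add_mul_sub_one hWmeas hWpos hWint hπ
  refine ⟨hint, concaveOn_integral (convex_Icc 0 1) ?_ hint, fun π hπ =>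
    hasDerivAt_integral_powerUtility_one_add_mul_sub_one hp.le hp1 hWmeas hWpos hWint hπ⟩
  filter_upwards [hWpos] with ω hω
  exact concaveOn_powerUtility_one_add_mul_sub_one hp.le hp1 hω
end

section
/- Let c : [0,1] → ℝ be concave and continuous, and let c_n : [0,1] → ℝ be a sequence of concave functions converging pointwise on [0,1] to c. Then c_n converges uniformly on [0,1] to c. -/
/-!
By uniform continuity, `c` varies by less than `ε` over distances at most `1 / k` for some `k`;
take `n` so large that `cₙ` is `ε`-close to `c` at the finitely many grid points `j / k`.
Concavity controls `cₙ` between grid points from both sides: on a cell `[a, b]` it lies above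
`min (cₙ a) (cₙ b)`, and if `a` lies between `x` and `b` with `|x - a| ≤ |a - b|`, extending the
chord from `b` through `a` gives `cₙ x ≤ cₙ a + |cₙ a - cₙ b|`.
-/

open Set Filter
open scoped Topology

section Concave

variable {s : Set ℝ} {f g : ℝ → ℝ} {a b h x ε : ℝ}

theorem ConcaveOn.le_add_abs_sub_of_mem_segment (hf : ConcaveOn ℝ s f) (hx : x ∈ s) (hb : b ∈ s)
    (ha : a ∈ segment ℝ x b) (hxa : |x - a| ≤ |a - b|) : f x ≤ f a + |f a - f b| := by
  obtain ⟨p, q, hp, hq, hpq, rfl⟩ := ha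
  have hconc := hf.2 hx hb hp hq hpq
  simp only [smul_eq_mul] at hconc hxa ⊢
  obtain rfl : p = 1 - q := by linarith
  rcases eq_or_ne x b with rfl | hxb
  · rw [show (1 - q) * x + q * x = x by ring]
    exact le_add_of_nonneg_right (abs_nonneg _)
  have hqp : q ≤ 1 - q := by
    rw [show x - ((1 - q) * x + q * b) = q * (x - b) by ring,
      show (1 - q) * x + q * b - b = (1 - q) * (x - b) by ring, abs_mul, abs_mul,
      abs_of_nonneg hq, abs_of_nonneg hp] at hxa
    exact le_of_mul_le_mul_right hxa (abs_pos.2 (sub_ne_zero.2 hxb))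
  set y := (1 - q) * x + q * b
  have key : (1 - q) * (f x - f y) ≤ (1 - q) * |f y - f b| := by
    calc (1 - q) * (f x - f y) ≤ q * (f y - f b) := by linarith
      _ ≤ q * |f y - f b| := mul_le_mul_of_nonneg_left (le_abs_self _) hq
      _ ≤ (1 - q) * |f y - f b| := mul_le_mul_of_nonneg_right hqp (abs_nonneg _)
  linarith [le_of_mul_le_mul_left key (by linarith : 0 < 1 - q)]

theorem ConcaveOn.sub_lt_of_mem_segment (hf : ConcaveOn ℝ s f)
    (hg : ∀ y ∈ s, ∀ z ∈ s, |y - z| ≤ h → |g y - g z| < ε) (ha : a ∈ s) (hb : b ∈ s)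
    (hx : x ∈ segment ℝ a b) (hab : |a - b| ≤ h) (hfa : |f a - g a| < ε) (hfb : |f b - g b| < ε) :
    g x - f x < 2 * ε := by
  have hxs : x ∈ s := hf.1.segment_subset ha hb hx
  rw [segment_eq_uIcc] at hx
  rw [abs_sub_comm] at hab
  have hxa := hg x hxs a ha ((abs_sub_left_of_mem_uIcc hx).trans hab)
  have hxb := hg b hb x hxs ((abs_sub_right_of_mem_uIcc hx).trans hab)
  have hmin := hf.ge_on_segment ha hb (segment_eq_uIcc a b ▸ hx)
  rw [abs_lt] at hfa hfb hxa hxb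
  rcases min_cases (f a) (f b) with ⟨hmin_eq, _⟩ | ⟨hmin_eq, _⟩ <;> linarith

theorem ConcaveOn.sub_lt_of_mem_segment_extend (hf : ConcaveOn ℝ s f)
    (hg : ∀ y ∈ s, ∀ z ∈ s, |y - z| ≤ h → |g y - g z| < ε) (hx : x ∈ s) (hb : b ∈ s)
    (ha : a ∈ segment ℝ x b) (hxa : |x - a| ≤ h) (hab : |a - b| = h) (hfa : |f a - g a| < ε)
    (hfb : |f b - g b| < ε) : f x - g x < 5 * ε := by
  have has : a ∈ s := hf.1.segment_subset hx hb ha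
  have hext := hf.le_add_abs_sub_of_mem_segment hx hb ha (hab ▸ hxa)
  have hgxa := hg x hx a has hxa
  have hgab := hg a has b hb hab.le
  rw [abs_lt] at hfa hfb hgxa hgab
  have hfab : |f a - f b| < 3 * ε := abs_lt.2 ⟨by linarith, by linarith⟩
  linarith

end Concave

def unitGrid (k : ℕ) : Set ℝ := (fun j : ℕ => (j : ℝ) / k) '' Iic k

namespace unitGrid

variable {k : ℕ} {x : ℝ}

theorem finite (k : ℕ) : (unitGrid k).Finite := (finite_Iic k).image _

theorem subset_Icc : unitGrid k ⊆ Icc 0 1 := by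
  rintro _ ⟨j, hj, rfl⟩
  exact ⟨by positivity, div_le_one_of_le₀ (by exact_mod_cast hj) (Nat.cast_nonneg k)⟩

theorem natCast_div_mem {j : ℕ} (hj : j ≤ k) : (j : ℝ) / k ∈ unitGrid k := ⟨j, hj, rfl⟩

theorem natCast_succ_div (k j : ℕ) : ((j + 1 : ℕ) : ℝ) / k = j / k + 1 / k := by
  push_cast; ring

theorem exists_cell (hk : 0 < k) (hx : x ∈ Icc 0 1) :
    ∃ i : ℕ, i < k ∧ (i : ℝ) / k ≤ x ∧ x ≤ i / k + 1 / k := by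
  have hk' : (0 : ℝ) < k := by exact_mod_cast hk
  simp only [← natCast_succ_div, div_le_iff₀ hk', le_div_iff₀ hk']
  rcases hx.2.lt_or_eq with hx1 | rfl
  · refine ⟨⌊x * k⌋₊, ?_, ?_, ?_⟩
    · exact (Nat.floor_lt (by nlinarith [hx.1])).2 (by nlinarith)
    · exact Nat.floor_le (by nlinarith [hx.1])
    · exact_mod_cast (Nat.lt_floor_add_one _).le
  · obtain ⟨m, rfl⟩ := Nat.exists_eq_add_of_lt hk
    refine ⟨m, by omega, ?_, ?_⟩ <;> push_cast <;> linarith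

theorem exists_mem_segment (hk : 0 < k) (hx : x ∈ Icc 0 1) :
    ∃ a ∈ unitGrid k, ∃ b ∈ unitGrid k, x ∈ segment ℝ a b ∧ |a - b| ≤ 1 / k := by
  obtain ⟨i, hik, hix, hxi⟩ := exists_cell hk hx
  have hk' : (0 : ℝ) ≤ 1 / k := by positivity
  refine ⟨i / k, natCast_div_mem hik.le, (i + 1 : ℕ) / k, natCast_div_mem hik, ?_, ?_⟩ <;>
    rw [natCast_succ_div]
  · rw [segment_eq_Icc (by linarith)]
    exact ⟨hix, hxi⟩
  · rw [abs_le]; constructor <;> linarith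

theorem exists_mem_segment_extend (hk : 2 ≤ k) (hx : x ∈ Icc 0 1) :
    ∃ a ∈ unitGrid k, ∃ b ∈ unitGrid k,
      a ∈ segment ℝ x b ∧ |x - a| ≤ 1 / k ∧ |a - b| = 1 / k := by
  obtain ⟨i, hik, hix, hxi⟩ := exists_cell (by omega : 0 < k) hx
  have hk' : (0 : ℝ) ≤ 1 / k := by positivity
  rcases i with _ | m
  · refine ⟨(0 + 1 : ℕ) / k, natCast_div_mem (by omega), (0 + 1 + 1 : ℕ) / k,
      natCast_div_mem hk, ?_, ?_, ?_⟩ <;>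
      simp only [natCast_succ_div, Nat.cast_zero, zero_div, zero_add] at hix hxi ⊢
    · rw [segment_eq_Icc (by linarith)]
      exact ⟨hxi, by linarith⟩
    · rw [abs_le]; constructor <;> linarith [hx.1]
    · rw [abs_of_nonpos (by linarith)]; ring
  · refine ⟨(m + 1 : ℕ) / k, natCast_div_mem hik.le, m / k, natCast_div_mem (by omega),
      ?_, ?_, ?_⟩ <;> simp only [natCast_succ_div] at hix hxi ⊢
    · rw [segment_symm, segment_eq_Icc (by linarith)]
      exact ⟨by linarith, hix⟩
    · rw [abs_le]; constructor <;> linarith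
    · rw [abs_of_nonneg (by linarith)]; ring

end unitGrid

theorem ConcaveOn.abs_sub_lt_of_unitGrid {f g : ℝ → ℝ} {k : ℕ} {x ε : ℝ}
    (hf : ConcaveOn ℝ (Icc 0 1) f) (hk : 2 ≤ k)
    (hg : ∀ y ∈ Icc (0 : ℝ) 1, ∀ z ∈ Icc (0 : ℝ) 1, |y - z| ≤ 1 / k → |g y - g z| < ε)
    (hfg : ∀ p ∈ unitGrid k, |f p - g p| < ε) (hx : x ∈ Icc 0 1) : |f x - g x| < 5 * ε := by
  obtain ⟨a, ha, b, hb, hxab, hab⟩ := unitGrid.exists_mem_segment (by omega : 0 < k) hx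
  obtain ⟨a', ha', b', hb', ha'xb', hxa', ha'b'⟩ := unitGrid.exists_mem_segment_extend hk hx
  have hlower := hf.sub_lt_of_mem_segment hg (unitGrid.subset_Icc ha) (unitGrid.subset_Icc hb)
    hxab hab (hfg a ha) (hfg b hb)
  have hupper := hf.sub_lt_of_mem_segment_extend hg hx (unitGrid.subset_Icc hb') ha'xb' hxa'
    ha'b' (hfg a' ha') (hfg b' hb')
  rw [abs_lt]
  constructor <;> linarith

theorem stmt8_general (c : ℝ → ℝ)
    (hcont : ContinuousOn c (Icc 0 1))
    (cn : ℕ → ℝ → ℝ) (hcn : ∀ n, ConcaveOn ℝ (Icc 0 1) (cn n))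
    (hconv : ∀ x ∈ Icc (0:ℝ) 1, Tendsto (fun n => cn n x) atTop (𝓝 (c x))) :
    TendstoUniformlyOn cn c atTop (Icc 0 1) := by
  rw [Metric.tendstoUniformlyOn_iff]
  intro ε hε
  obtain ⟨δ, hδ, hcδ⟩ := Metric.uniformContinuousOn_iff.1
    (isCompact_Icc.uniformContinuousOn_of_continuous hcont) (ε / 5) (by positivity)
  obtain ⟨k, hk⟩ := exists_nat_gt (max 2 (1 / δ))
  have hk2 : 2 ≤ k := by exact_mod_cast (le_max_left _ _).trans hk.le
  have hkδ : 1 / (k : ℝ) < δ :=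
    (one_div_lt hδ (by linarith [le_max_left 2 (1 / δ)])).1 ((le_max_right _ _).trans_lt hk)
  have hclose : ∀ᶠ n in atTop, ∀ p ∈ unitGrid k, |cn n p - c p| < ε / 5 :=
    (eventually_all_finite (unitGrid.finite k)).2 fun p hp =>
      Metric.tendsto_nhds.1 (hconv p (unitGrid.subset_Icc hp)) _ (by positivity)
  filter_upwards [hclose] with n hn x hx
  have := (hcn n).abs_sub_lt_of_unitGrid hk2
    (fun y hy z hz hyz => hcδ y hy z hz (hyz.trans_lt hkδ)) hn hx
  rw [dist_comm, Real.dist_eq]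
  linarith

theorem stmt8 (c : ℝ → ℝ) (hc : ConcaveOn ℝ (Icc 0 1) c)
    (hcont : ContinuousOn c (Icc 0 1))
    (cn : ℕ → ℝ → ℝ) (hcn : ∀ n, ConcaveOn ℝ (Icc 0 1) (cn n))
    (hconv : ∀ x ∈ Icc (0:ℝ) 1, Tendsto (fun n => cn n x) atTop (𝓝 (c x))) :
    TendstoUniformlyOn cn c atTop (Icc 0 1) :=
  stmt8_general c hcont cn hcn hconv
end

section
/- Let 0 < p_a < p_b, c ≥ 0, and let F be a Lévy measure on ℝ with F((−∞,−1]) = 0 such that ∫_{(1,∞)} x dF(x) < ∞ and ∫_{(1,∞)} (1+x)^{1−q} dF(x) < ∞ for every q ∈ (p_a, p_b). Let A := {π ∈ ℝ : F({x : 1 + πx ≤ 0}) = 0}. Then the functions K(π,p) := ∫_{(−1,∞)} ( x(1+πx)^{−p} − x − p x² (1+πx)^{−1−p} ) dF(x) and M(π,p) := ∫_{(−1,∞)} ( −πx (1+πx)^{−p} log(1+πx) ) dF(x) are well defined (the integrands are F-integrable) and jointly continuous at every (π,p) with π in the interior of A, π ≠ 0, and p ∈ (p_a, p_b). -/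
/-!
Dominated convergence. As `π₀` is interior to `A`, some `c = t * π₀` with `t > 1` lies in `A`, and
for `π = s * c` with `0 ≤ s ≤ 1` we have `1 + π x = (1 - s) + s (1 + c x) ≥ 1 - s` for `F`-a.e. `x`;
so for `π` near `π₀` the base `1 + π x` stays above a fixed `m > 0`. Given this lower bound, the mean
value theorem for `y ↦ y ^ (-p)` and `|log y| ≤ |y - 1| / m` make both integrands `O(x²)` on
bounded sets of `x`. The set `{x > -1 | 1 + c x > 0}` is unbounded only when `c > 0`, and then for
`x > 1` the `K`-integrand is `O(x)` and, by `log y ≤ y ^ ε / ε`, the `M`-integrand is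
`O((1 + x) ^ (1 - q))` for any `q < p`. Hence a single multiple of
`min (x², 1) + 1_{x > 1} (x + (1 + x) ^ (1 - q))`, integrable by the assumptions on `F`, dominates
both integrands for all `(π, p)` near `(π₀, p₀)`.
-/

open MeasureTheory Set Filter
open scoped ENNReal Topology

lemma abs_log_le_abs_sub_one_div {m y : ℝ} (hm : 0 < m) (hm1 : m ≤ 1) (hy : m ≤ y) :
    |Real.log y| ≤ |y - 1| / m := by
  have hy0 : 0 < y := hm.trans_le hy
  rw [abs_le]
  constructor
  · calc -(|y - 1| / m) ≤ -(|y - 1| / y) := by gcongr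
      _ = -|1 - y⁻¹| := by rw [← abs_of_pos hy0, ← abs_div, abs_of_pos hy0]; field_simp
      _ ≤ 1 - y⁻¹ := neg_abs_le _
      _ ≤ Real.log y := Real.one_sub_inv_le_log_of_pos hy0
  · calc Real.log y ≤ y - 1 := Real.log_le_sub_one_of_pos hy0
      _ ≤ |y - 1| := le_abs_self _
      _ ≤ |y - 1| / m := le_div_self (abs_nonneg _) hm hm1

lemma abs_rpow_neg_sub_one_le {m y p : ℝ} (hp : 0 ≤ p) (hm : 0 < m) (hm1 : m ≤ 1)
    (hy : m ≤ y) : |y ^ (-p) - 1| ≤ p * m ^ (-(1 + p)) * |y - 1| := by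
  have hderiv : ∀ z ∈ Ici m, HasDerivAt (fun z : ℝ => z ^ (-p)) (-p * z ^ (-(1 + p))) z := by
    intro z hz
    convert Real.hasDerivAt_rpow_const (p := -p) (Or.inl (hm.trans_le hz).ne') using 2
    ring_nf
  have hbound : ∀ z ∈ Ici m, ‖-p * z ^ (-(1 + p))‖ ≤ p * m ^ (-(1 + p)) := by
    intro z hz
    rw [Real.norm_eq_abs, abs_mul, abs_neg, abs_of_nonneg hp,
      abs_of_nonneg (Real.rpow_nonneg (hm.trans_le hz).le _)]
    exact mul_le_mul_of_nonneg_left (Real.rpow_le_rpow_of_nonpos hm hz (by linarith)) hp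
  simpa [Real.norm_eq_abs, Real.one_rpow] using
    (convex_Ici m).norm_image_sub_le_of_norm_hasDerivWithin_le
      (fun z hz => (hderiv z hz).hasDerivWithinAt) hbound (show (1 : ℝ) ∈ Ici m from hm1)
      (show y ∈ Ici m from hy)

lemma rpow_le_max_mul_rpow {a b y z r : ℝ} (ha : 0 < a) (hz : 0 < z) (hay : a * z ≤ y)
    (hyb : y ≤ b * z) : y ^ r ≤ max (a ^ r) (b ^ r) * z ^ r := by
  have hb : 0 < b := pos_of_mul_pos_left ((mul_pos ha hz).trans_le (hay.trans hyb)) hz.le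
  rcases le_total 0 r with hr | hr
  · calc y ^ r ≤ (b * z) ^ r := Real.rpow_le_rpow ((mul_pos ha hz).le.trans hay) hyb hr
      _ = b ^ r * z ^ r := Real.mul_rpow hb.le hz.le
      _ ≤ _ := by gcongr; exact le_max_right _ _
  · calc y ^ r ≤ (a * z) ^ r := Real.rpow_le_rpow_of_nonpos (mul_pos ha hz) hay hr
      _ = a ^ r * z ^ r := Real.mul_rpow ha.le hz.le
      _ ≤ _ := by gcongr; exact le_max_left _ _

lemma sq_le_sq_mul_min_sq_one {x R : ℝ} (hR : 1 ≤ R) (hxR : |x| ≤ R) :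
    x ^ 2 ≤ R ^ 2 * min (x ^ 2) 1 := by
  rcases le_total (x ^ 2) 1 with h | h
  · rw [min_eq_left h]
    exact le_mul_of_one_le_left (sq_nonneg x) (one_le_pow₀ hR)
  · rw [min_eq_right h, mul_one, ← sq_abs x]
    gcongr

lemma one_sub_le_one_add_mul_mul {s c x : ℝ} (hs : 0 ≤ s) (hcx : 0 ≤ 1 + c * x) :
    1 - s ≤ 1 + s * c * x := by
  nlinarith

lemma exists_one_lt_mul_mem_of_mem_interior {s : Set ℝ} {a : ℝ} (ha : a ∈ interior s) :
    ∃ t, 1 < t ∧ t * a ∈ s := by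
  have hlim : Tendsto (fun t : ℝ => t * a) (𝓝 1) (𝓝 a) := by
    simpa using (continuous_mul_const a).tendsto (1 : ℝ)
  exact ((eventually_mem_nhdsWithin (s := Ioi 1)).and
    ((hlim.eventually (mem_interior_iff_mem_nhds.mp ha)).filter_mono nhdsWithin_le_nhds)).exists

lemma ae_one_add_mul_pos {F : Measure ℝ} {c : ℝ} (hc : F {x | 1 + c * x ≤ 0} = 0) :
    ∀ᵐ x ∂F, 0 < 1 + c * x :=
  (measure_eq_zero_iff_ae_notMem.1 hc).mono fun _ hx => not_le.1 hx

lemma integrable_and_continuousAt_integral {X α E : Type*} [TopologicalSpace X]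
    [FirstCountableTopology X] [MeasurableSpace α] [NormedAddCommGroup E] [NormedSpace ℝ E]
    {μ : Measure α} {f : X → α → E} {x₀ : X} {bound : α → ℝ}
    (hmeas : ∀ x, AEStronglyMeasurable (f x) μ)
    (hbound : ∀ᶠ x in 𝓝 x₀, ∀ᵐ a ∂μ, ‖f x a‖ ≤ bound a) (hint : Integrable bound μ)
    (hcont : ∀ᵐ a ∂μ, ContinuousAt (fun x => f x a) x₀) :
    Integrable (f x₀) μ ∧ ContinuousAt (fun x => ∫ a, f x a ∂μ) x₀ :=
  ⟨hint.mono' (hmeas x₀) hbound.self_of_nhds,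
    continuousAt_of_dominated (.of_forall hmeas) hbound hint hcont⟩

noncomputable def kIntegrand (π p x : ℝ) : ℝ :=
  x * (1 + π * x) ^ (-p) - x - p * x ^ 2 * (1 + π * x) ^ (-(1 + p))

noncomputable def mIntegrand (π p x : ℝ) : ℝ :=
  -(π * x) * (1 + π * x) ^ (-p) * Real.log (1 + π * x)

lemma measurable_kIntegrand (π p : ℝ) : Measurable (kIntegrand π p) := by
  unfold kIntegrand; fun_prop

lemma measurable_mIntegrand (π p : ℝ) : Measurable (mIntegrand π p) := by
  unfold mIntegrand; fun_prop

lemma continuousAt_kIntegrand {π₀ p₀ x : ℝ} (h : 0 < 1 + π₀ * x) :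
    ContinuousAt (fun z : ℝ × ℝ => kIntegrand z.1 z.2 x) (π₀, p₀) := by
  have hbase : ContinuousAt (fun z : ℝ × ℝ => 1 + z.1 * x) (π₀, p₀) := by fun_prop
  have h₁ : ContinuousAt (fun z : ℝ × ℝ => (1 + z.1 * x) ^ (-z.2)) (π₀, p₀) :=
    hbase.rpow (by fun_prop) (Or.inl h.ne')
  have h₂ : ContinuousAt (fun z : ℝ × ℝ => (1 + z.1 * x) ^ (-(1 + z.2))) (π₀, p₀) :=
    hbase.rpow (by fun_prop) (Or.inl h.ne')
  unfold kIntegrand; fun_prop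

lemma continuousAt_mIntegrand {π₀ p₀ x : ℝ} (h : 0 < 1 + π₀ * x) :
    ContinuousAt (fun z : ℝ × ℝ => mIntegrand z.1 z.2 x) (π₀, p₀) := by
  have hbase : ContinuousAt (fun z : ℝ × ℝ => 1 + z.1 * x) (π₀, p₀) := by fun_prop
  have h₁ : ContinuousAt (fun z : ℝ × ℝ => (1 + z.1 * x) ^ (-z.2)) (π₀, p₀) :=
    hbase.rpow (by fun_prop) (Or.inl h.ne')
  have h₂ := hbase.log h.ne'
  unfold mIntegrand; fun_prop

lemma abs_kIntegrand_le {π p x m : ℝ} (hp : 0 ≤ p) (hm : 0 < m) (hm1 : m ≤ 1)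
    (hy : m ≤ 1 + π * x) : |kIntegrand π p x| ≤ p * (|π| + 1) * m ^ (-(1 + p)) * x ^ 2 := by
  have hy0 : 0 < 1 + π * x := hm.trans_le hy
  have hdiff : |x * ((1 + π * x) ^ (-p) - 1)| ≤ p * |π| * m ^ (-(1 + p)) * x ^ 2 := by
    calc |x * ((1 + π * x) ^ (-p) - 1)|
        ≤ |x| * (p * m ^ (-(1 + p)) * |1 + π * x - 1|) := by
          rw [abs_mul]; gcongr; exact abs_rpow_neg_sub_one_le hp hm hm1 hy
      _ = p * |π| * m ^ (-(1 + p)) * x ^ 2 := by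
          rw [add_sub_cancel_left, abs_mul, ← sq_abs x]; ring
  have hcorr : |p * x ^ 2 * (1 + π * x) ^ (-(1 + p))| ≤ p * m ^ (-(1 + p)) * x ^ 2 := by
    rw [abs_of_nonneg (by positivity)]
    calc p * x ^ 2 * (1 + π * x) ^ (-(1 + p)) ≤ p * x ^ 2 * m ^ (-(1 + p)) :=
          mul_le_mul_of_nonneg_left (Real.rpow_le_rpow_of_nonpos hm hy (by linarith))
            (by positivity)
      _ = p * m ^ (-(1 + p)) * x ^ 2 := by ring
  calc |kIntegrand π p x|
      = |x * ((1 + π * x) ^ (-p) - 1) - p * x ^ 2 * (1 + π * x) ^ (-(1 + p))| := by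
        rw [kIntegrand]; ring_nf
    _ ≤ p * |π| * m ^ (-(1 + p)) * x ^ 2 + p * m ^ (-(1 + p)) * x ^ 2 :=
        (abs_sub _ _).trans (add_le_add hdiff hcorr)
    _ = p * (|π| + 1) * m ^ (-(1 + p)) * x ^ 2 := by ring

lemma abs_mIntegrand_le {π p x m : ℝ} (hp : 0 ≤ p) (hm : 0 < m) (hm1 : m ≤ 1)
    (hy : m ≤ 1 + π * x) : |mIntegrand π p x| ≤ π ^ 2 * m ^ (-(1 + p)) * x ^ 2 := by
  have hy0 : 0 < 1 + π * x := hm.trans_le hy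
  have hm_rpow : m ^ (-(1 + p)) = m ^ (-p) / m := by
    rw [show -(1 + p) = -p - 1 by ring, Real.rpow_sub hm, Real.rpow_one]
  calc |mIntegrand π p x|
      = |π * x| * (1 + π * x) ^ (-p) * |Real.log (1 + π * x)| := by
        rw [mIntegrand, abs_mul, abs_mul, abs_neg, abs_of_pos (Real.rpow_pos_of_pos hy0 _)]
    _ ≤ |π * x| * m ^ (-p) * (|1 + π * x - 1| / m) :=
        mul_le_mul (mul_le_mul_of_nonneg_left (Real.rpow_le_rpow_of_nonpos hm hy (by linarith))
          (abs_nonneg _)) (abs_log_le_abs_sub_one_div hm hm1 hy) (abs_nonneg _) (by positivity)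
    _ = π ^ 2 * m ^ (-(1 + p)) * x ^ 2 := by
        rw [add_sub_cancel_left, hm_rpow, abs_mul, ← sq_abs x, ← sq_abs π]; ring

lemma abs_kIntegrand_le_of_pos {κ π p x : ℝ} (hκ : 0 < κ) (hκπ : κ ≤ π) (hp : 0 ≤ p)
    (hx : 0 ≤ x) : |kIntegrand π p x| ≤ (2 + p / κ) * x := by
  have hy : 1 ≤ 1 + π * x := by nlinarith
  have hy0 : 0 < 1 + π * x := by linarith
  have hmain : |x * (1 + π * x) ^ (-p)| ≤ x := by
    rw [abs_of_nonneg (by positivity)]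
    exact mul_le_of_le_one_right hx (Real.rpow_le_one_of_one_le_of_nonpos hy (by linarith))
  have hcorr : |p * x ^ 2 * (1 + π * x) ^ (-(1 + p))| ≤ p / κ * x := by
    rw [abs_of_nonneg (by positivity)]
    calc p * x ^ 2 * (1 + π * x) ^ (-(1 + p)) ≤ p * x ^ 2 * (1 + π * x) ^ (-1 : ℝ) :=
          mul_le_mul_of_nonneg_left (Real.rpow_le_rpow_of_exponent_le hy (by linarith))
            (by positivity)
      _ = p * x * (x / (1 + π * x)) := by rw [Real.rpow_neg_one]; ring
      _ ≤ p * x * (1 / κ) := by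
          refine mul_le_mul_of_nonneg_left ?_ (by positivity)
          rw [div_le_div_iff₀ hy0 hκ]; nlinarith
      _ = p / κ * x := by ring
  calc |kIntegrand π p x|
      ≤ |x * (1 + π * x) ^ (-p)| + |x| + |p * x ^ 2 * (1 + π * x) ^ (-(1 + p))| :=
        (abs_sub _ _).trans (add_le_add (abs_sub _ _) le_rfl)
    _ ≤ x + x + p / κ * x := by rw [abs_of_nonneg hx]; gcongr
    _ = (2 + p / κ) * x := by ring

lemma abs_mIntegrand_le_rpow {π p q x : ℝ} (hπ : 0 ≤ π) (hx : 0 ≤ x) (hqp : q < p) :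
    |mIntegrand π p x| ≤ (1 + π * x) ^ (1 - q) / (p - q) := by
  have hπx : 0 ≤ π * x := mul_nonneg hπ hx
  have hy0 : 0 < 1 + π * x := by linarith
  have hlog : 0 ≤ Real.log (1 + π * x) := Real.log_nonneg (by linarith)
  have hsplit :
      (1 + π * x) ^ (1 - q) = (1 + π * x) * (1 + π * x) ^ (-p) * (1 + π * x) ^ (p - q) := by
    rw [show 1 - q = 1 + -p + (p - q) by ring, Real.rpow_add hy0, Real.rpow_add hy0,
      Real.rpow_one]
  calc |mIntegrand π p x| = π * x * (1 + π * x) ^ (-p) * Real.log (1 + π * x) := by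
        rw [mIntegrand, neg_mul, neg_mul, abs_neg, abs_of_nonneg (by positivity)]
    _ ≤ (1 + π * x) * (1 + π * x) ^ (-p) * ((1 + π * x) ^ (p - q) / (p - q)) := by
        gcongr
        · linarith
        · exact Real.log_le_rpow_div hy0.le (by linarith)
    _ = (1 + π * x) ^ (1 - q) / (p - q) := by rw [hsplit]; ring

lemma abs_integrands_le_mul_min_sq {π p p₂ m K R x : ℝ} (hp : 0 ≤ p) (hpp₂ : p ≤ p₂)
    (hm : 0 < m) (hm1 : m ≤ 1) (hy : m ≤ 1 + π * x) (hπK : |π| ≤ K) (hR : 1 ≤ R)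
    (hxR : |x| ≤ R) :
    |kIntegrand π p x| ≤ (p₂ * (K + 1) + K ^ 2) * m ^ (-(1 + p₂)) * R ^ 2 * min (x ^ 2) 1 ∧
      |mIntegrand π p x| ≤ (p₂ * (K + 1) + K ^ 2) * m ^ (-(1 + p₂)) * R ^ 2 * min (x ^ 2) 1 := by
  have hp₂ : 0 ≤ p₂ := hp.trans hpp₂
  have hK : 0 ≤ K := (abs_nonneg π).trans hπK
  have hmp : m ^ (-(1 + p)) ≤ m ^ (-(1 + p₂)) :=
    Real.rpow_le_rpow_of_exponent_ge hm hm1 (by linarith)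
  have hπ2 : π ^ 2 ≤ K ^ 2 := by rw [← sq_abs]; gcongr
  have hpK : p * (|π| + 1) ≤ p₂ * (K + 1) := mul_le_mul hpp₂ (by linarith) (by positivity) hp₂
  have hpK0 : 0 ≤ p₂ * (K + 1) := mul_nonneg hp₂ (by linarith)
  have hlift {a : ℝ} (ha : a ≤ p₂ * (K + 1) + K ^ 2) :
      a * m ^ (-(1 + p)) * x ^ 2 ≤
        (p₂ * (K + 1) + K ^ 2) * m ^ (-(1 + p₂)) * R ^ 2 * min (x ^ 2) 1 :=
    calc a * m ^ (-(1 + p)) * x ^ 2 ≤ (p₂ * (K + 1) + K ^ 2) * m ^ (-(1 + p₂)) * x ^ 2 := by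
          gcongr
      _ ≤ (p₂ * (K + 1) + K ^ 2) * m ^ (-(1 + p₂)) * (R ^ 2 * min (x ^ 2) 1) :=
          mul_le_mul_of_nonneg_left (sq_le_sq_mul_min_sq_one hR hxR) (by positivity)
      _ = _ := by ring
  exact ⟨(abs_kIntegrand_le hp hm hm1 hy).trans (hlift (by linarith [sq_nonneg K])),
    (abs_mIntegrand_le hp hm hm1 hy).trans (hlift (by linarith))⟩

lemma abs_integrands_le_of_pos {κ K π p p₁ p₂ q x : ℝ} (hκ : 0 < κ) (hκπ : κ ≤ π) (hπK : π ≤ K)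
    (hq : 0 ≤ q) (hqp : q < p₁) (hp : p ∈ Icc p₁ p₂) (hx : 0 ≤ x) :
    |kIntegrand π p x| ≤ (2 + p₂ / κ) * x ∧
      |mIntegrand π p x| ≤
        max (min 1 κ ^ (1 - q)) (max 1 K ^ (1 - q)) / (p₁ - q) * (1 + x) ^ (1 - q) := by
  have hp0 : 0 ≤ p := by linarith [hp.1]
  constructor
  · calc |kIntegrand π p x| ≤ (2 + p / κ) * x := abs_kIntegrand_le_of_pos hκ hκπ hp0 hx
      _ ≤ (2 + p₂ / κ) * x := by gcongr; exact hp.2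
  · have hy0 : 0 ≤ 1 + π * x := by nlinarith
    have hlow : min 1 κ * (1 + x) ≤ 1 + π * x := by
      nlinarith [min_le_left 1 κ, min_le_right 1 κ]
    have hupp : 1 + π * x ≤ max 1 K * (1 + x) := by
      nlinarith [le_max_left 1 K, le_max_right 1 K]
    calc |mIntegrand π p x| ≤ (1 + π * x) ^ (1 - q) / (p - q) :=
          abs_mIntegrand_le_rpow (hκ.le.trans hκπ) hx (hqp.trans_le hp.1)
      _ ≤ (1 + π * x) ^ (1 - q) / (p₁ - q) :=
          div_le_div_of_nonneg_left (Real.rpow_nonneg hy0 _) (sub_pos.2 hqp) (by linarith [hp.1])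
      _ ≤ max (min 1 κ ^ (1 - q)) (max 1 K ^ (1 - q)) * (1 + x) ^ (1 - q) / (p₁ - q) := by
          gcongr
          exact rpow_le_max_mul_rpow (lt_min one_pos hκ) (by linarith) hlow hupp
      _ = _ := by ring

noncomputable def levyDominant (q x : ℝ) : ℝ :=
  min (x ^ 2) 1 + (Ioi 1).indicator (fun x => x + (1 + x) ^ (1 - q)) x

lemma integrable_levyDominant {F : Measure ℝ} {q : ℝ}
    (hFlevy : ∫⁻ x, ENNReal.ofReal (min (x ^ 2) 1) ∂F ≠ ∞)
    (hFx : IntegrableOn (fun x => x) (Ioi 1) F)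
    (hFq : IntegrableOn (fun x => (1 + x) ^ (1 - q)) (Ioi 1) F) :
    Integrable (levyDominant q) F := by
  have hmin : Integrable (fun x : ℝ => min (x ^ 2) 1) F := by
    refine ⟨by fun_prop, ?_⟩
    rw [hasFiniteIntegral_iff_ofReal (.of_forall fun x => by positivity)]
    exact hFlevy.lt_top
  exact hmin.add ((hFx.add hFq).integrable_indicator measurableSet_Ioi)

lemma min_sq_one_le_levyDominant (q x : ℝ) : min (x ^ 2) 1 ≤ levyDominant q x := by
  refine le_add_of_nonneg_right (indicator_nonneg (fun y hy => ?_) x)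
  have : (0 : ℝ) < y := zero_lt_one.trans hy
  positivity

lemma levyDominant_of_one_lt {q x : ℝ} (hx : 1 < x) :
    levyDominant q x = 1 + (x + (1 + x) ^ (1 - q)) := by
  rw [levyDominant, indicator_of_mem (mem_Ioi.mpr hx), min_eq_right (by nlinarith)]

lemma integrands_dominated {c s₀ s₁ p₁ p₂ q : ℝ} (hc : c ≠ 0) (hs₀ : 0 < s₀) (hs₁ : s₁ < 1)
    (hq : 0 ≤ q) (hqp : q < p₁) :
    ∃ B, ∀ s ∈ Icc s₀ s₁, ∀ p ∈ Icc p₁ p₂, ∀ x, -1 < x → 0 < 1 + c * x →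
      |kIntegrand (s * c) p x| ≤ B * levyDominant q x ∧
        |mIntegrand (s * c) p x| ≤ B * levyDominant q x := by
  set R := max 1 |c|⁻¹
  set C₁ := (p₂ * (|c| + 1) + |c| ^ 2) * (1 - s₁) ^ (-(1 + p₂)) * R ^ 2
  set C₂ := 2 + p₂ / (s₀ * c)
  set C₃ := max (min 1 (s₀ * c) ^ (1 - q)) (max 1 c ^ (1 - q)) / (p₁ - q)
  -- the absolute values spare us the signs of the constants (`C₂ < 0` when `c < 0`)
  set B := |C₁| + |C₂| + |C₃|
  refine ⟨B, fun s hs p hp x hx hcx => ?_⟩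
  have hs0 : 0 ≤ s := hs₀.le.trans hs.1
  have hp0 : 0 ≤ p := by linarith [hp.1]
  have hR : 1 ≤ R := le_max_left _ _
  have hdom0 : 0 ≤ levyDominant q x :=
    (by positivity : (0 : ℝ) ≤ min (x ^ 2) 1).trans (min_sq_one_le_levyDominant q x)
  have hB {a C t : ℝ} (ha : a ≤ C * t) (hC : |C| ≤ B) (ht0 : 0 ≤ t)
      (ht : t ≤ levyDominant q x) : a ≤ B * levyDominant q x :=
    calc a ≤ C * t := ha
      _ ≤ |C| * levyDominant q x := mul_le_mul (le_abs_self C) ht ht0 (abs_nonneg C)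
      _ ≤ B * levyDominant q x := mul_le_mul_of_nonneg_right hC hdom0
  rcases le_or_gt |x| R with hxR | hRx
  · have hy : 1 - s₁ ≤ 1 + s * c * x :=
      (sub_le_sub_left hs.2 1).trans (one_sub_le_one_add_mul_mul hs0 hcx.le)
    have hsc : |s * c| ≤ |c| := by
      rw [abs_mul, abs_of_nonneg hs0]
      exact mul_le_of_le_one_left (abs_nonneg c) (by linarith [hs.2])
    have hB₁ : |C₁| ≤ B := by linarith [abs_nonneg C₂, abs_nonneg C₃]
    obtain ⟨hk, hm⟩ := abs_integrands_le_mul_min_sq hp0 hp.2 (by linarith)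
      (by linarith [hs.1, hs.2]) hy hsc hR hxR
    exact ⟨hB hk hB₁ (by positivity) (min_sq_one_le_levyDominant q x),
      hB hm hB₁ (by positivity) (min_sq_one_le_levyDominant q x)⟩
  · have hRx' : R < x := lt_of_not_ge fun h => hRx.not_ge (abs_le.2 ⟨by linarith, h⟩)
    have hx1 : 1 < x := hR.trans_lt hRx'
    have hcpos : 0 < c := by
      have hcx' : 1 < |c| * x := by
        have := mul_lt_mul_of_pos_left ((le_max_right _ _).trans_lt hRx') (abs_pos.2 hc)
        rwa [mul_inv_cancel₀ (abs_ne_zero.2 hc)] at this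
      rcases hc.lt_or_gt with hneg | hpos
      · rw [abs_of_neg hneg] at hcx'; linarith
      · exact hpos
    obtain ⟨hk, hm⟩ := abs_integrands_le_of_pos (x := x) (mul_pos hs₀ hcpos)
      (mul_le_mul_of_nonneg_right hs.1 hcpos.le)
      (mul_le_of_le_one_left hcpos.le (by linarith [hs.2])) hq hqp hp (by linarith)
    have hdom := levyDominant_of_one_lt (q := q) hx1
    have hrpow : 0 ≤ (1 + x) ^ (1 - q) := Real.rpow_nonneg (by linarith) _
    exact ⟨hB hk (by linarith [abs_nonneg C₁, abs_nonneg C₃]) (by linarith) (by linarith),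
      hB hm (by linarith [abs_nonneg C₁, abs_nonneg C₂]) hrpow (by linarith)⟩

lemma eventually_integrands_dominated {F : Measure ℝ} {pa π₀ p₀ : ℝ} (hpa : 0 < pa)
    (hπ₀ : π₀ ∈ interior {π : ℝ | F {x | 1 + π * x ≤ 0} = 0}) (hπ₀0 : π₀ ≠ 0) (hp₀ : pa < p₀) :
    ∃ q ∈ Ioo pa p₀, ∃ B, (∀ᵐ x ∂F.restrict (Ioi (-1)), 0 < 1 + π₀ * x) ∧
      ∀ᶠ z in 𝓝 (π₀, p₀), ∀ᵐ x ∂F.restrict (Ioi (-1)),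
        ‖kIntegrand z.1 z.2 x‖ ≤ B * levyDominant q x ∧
          ‖mIntegrand z.1 z.2 x‖ ≤ B * levyDominant q x := by
  obtain ⟨t, ht, hc⟩ := exists_one_lt_mul_mem_of_mem_interior hπ₀
  set c := t * π₀
  have hc0 : c ≠ 0 := mul_ne_zero (by linarith) hπ₀0
  have hπ₀c : π₀ / c = t⁻¹ := div_mul_cancel_right₀ hπ₀0 t
  obtain ⟨s₀, hs₀, hs₀t⟩ := exists_between (inv_pos.2 (zero_lt_one.trans ht))
  obtain ⟨s₁, hts₁, hs₁⟩ := exists_between (inv_lt_one_of_one_lt₀ ht)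
  obtain ⟨p₁, hpap₁, hp₁p₀⟩ := exists_between hp₀
  obtain ⟨q, hpaq, hqp₁⟩ := exists_between hpap₁
  obtain ⟨B, hB⟩ := integrands_dominated (p₂ := p₀ + 1) hc0 hs₀ hs₁ (hpa.trans hpaq).le hqp₁
  have hae : ∀ᵐ x ∂F.restrict (Ioi (-1)), -1 < x ∧ 0 < 1 + c * x :=
    (ae_restrict_mem measurableSet_Ioi).and (ae_restrict_of_ae (ae_one_add_mul_pos hc))
  have hnear : ∀ᶠ z in 𝓝 (π₀, p₀), z.1 / c ∈ Icc s₀ s₁ ∧ z.2 ∈ Icc p₁ (p₀ + 1) :=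
    Eventually.prod_nhds ((continuous_id.div_const c).continuousAt.preimage_mem_nhds
      (Icc_mem_nhds (hπ₀c ▸ hs₀t) (hπ₀c ▸ hts₁))) (Icc_mem_nhds hp₁p₀ (lt_add_one p₀))
  refine ⟨q, ⟨hpaq, hqp₁.trans hp₁p₀⟩, B, hae.mono fun x hx => ?_, ?_⟩
  · have := one_sub_le_one_add_mul_mul (inv_nonneg.2 (zero_le_one.trans ht.le)) hx.2.le
    rw [← hπ₀c, div_mul_cancel₀ _ hc0] at this
    linarith [inv_lt_one_of_one_lt₀ ht]
  · filter_upwards [hnear] with z hz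
    filter_upwards [hae] with x hx
    simpa only [Real.norm_eq_abs, div_mul_cancel₀ _ hc0] using hB _ hz.1 _ hz.2 x hx.1 hx.2

theorem stmt11_general (pa pb : ℝ) (hpa : 0 < pa)
    (F : Measure ℝ)
    (hFlevy : ∫⁻ x, ENNReal.ofReal (min (x ^ 2) 1) ∂F ≠ ∞)
    (hFx : IntegrableOn (fun x => x) (Ioi (1 : ℝ)) F)
    (hFq : ∀ q ∈ Ioo pa pb, IntegrableOn (fun x => (1 + x) ^ (1 - q)) (Ioi (1 : ℝ)) F) :
    ∀ π₀ ∈ interior {π : ℝ | F {x | 1 + π * x ≤ 0} = 0}, π₀ ≠ 0 →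
      ∀ p₀ ∈ Ioo pa pb,
        IntegrableOn
          (fun x => x * (1 + π₀ * x) ^ (-p₀) - x - p₀ * x ^ 2 * (1 + π₀ * x) ^ (-(1 + p₀)))
          (Ioi (-1 : ℝ)) F ∧
        IntegrableOn
          (fun x => -(π₀ * x) * (1 + π₀ * x) ^ (-p₀) * Real.log (1 + π₀ * x))
          (Ioi (-1 : ℝ)) F ∧
        ContinuousAt (fun q : ℝ × ℝ =>
          ∫ x in Ioi (-1 : ℝ),
            (x * (1 + q.1 * x) ^ (-q.2) - x - q.2 * x ^ 2 * (1 + q.1 * x) ^ (-(1 + q.2))) ∂F)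
          (π₀, p₀) ∧
        ContinuousAt (fun q : ℝ × ℝ =>
          ∫ x in Ioi (-1 : ℝ),
            (-(q.1 * x) * (1 + q.1 * x) ^ (-q.2) * Real.log (1 + q.1 * x)) ∂F)
          (π₀, p₀) := by
  intro π₀ hπ₀ hπ₀0 p₀ hp₀
  obtain ⟨q, hq, B, hpos, hbound⟩ := eventually_integrands_dominated hpa hπ₀ hπ₀0 hp₀.1
  have hint : Integrable (fun x => B * levyDominant q x) (F.restrict (Ioi (-1))) :=
    ((integrable_levyDominant hFlevy hFx
      (hFq q ⟨hq.1, hq.2.trans hp₀.2⟩)).const_mul B).restrict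
  obtain ⟨hKint, hKcont⟩ := integrable_and_continuousAt_integral
    (fun z : ℝ × ℝ => (measurable_kIntegrand z.1 z.2).aestronglyMeasurable)
    (hbound.mono fun _ h => h.mono fun _ => And.left) hint
    (hpos.mono fun _ => continuousAt_kIntegrand)
  obtain ⟨hMint, hMcont⟩ := integrable_and_continuousAt_integral
    (fun z : ℝ × ℝ => (measurable_mIntegrand z.1 z.2).aestronglyMeasurable)
    (hbound.mono fun _ h => h.mono fun _ => And.right) hint
    (hpos.mono fun _ => continuousAt_mIntegrand)
  exact ⟨hKint, hMint, hKcont, hMcont⟩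

theorem stmt11 (pa pb c : ℝ) (hpa : 0 < pa) (hab : pa < pb) (hc : 0 ≤ c)
    (F : Measure ℝ)
    (hF0 : F {0} = 0)
    (hFlevy : ∫⁻ x, ENNReal.ofReal (min (x ^ 2) 1) ∂F ≠ ∞)
    (hFneg : F (Iic (-1 : ℝ)) = 0)
    (hFx : IntegrableOn (fun x => x) (Ioi (1 : ℝ)) F)
    (hFq : ∀ q ∈ Ioo pa pb, IntegrableOn (fun x => (1 + x) ^ (1 - q)) (Ioi (1 : ℝ)) F) :
    ∀ π₀ ∈ interior {π : ℝ | F {x | 1 + π * x ≤ 0} = 0}, π₀ ≠ 0 →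
      ∀ p₀ ∈ Ioo pa pb,
        IntegrableOn
          (fun x => x * (1 + π₀ * x) ^ (-p₀) - x - p₀ * x ^ 2 * (1 + π₀ * x) ^ (-(1 + p₀)))
          (Ioi (-1 : ℝ)) F ∧
        IntegrableOn
          (fun x => -(π₀ * x) * (1 + π₀ * x) ^ (-p₀) * Real.log (1 + π₀ * x))
          (Ioi (-1 : ℝ)) F ∧
        ContinuousAt (fun q : ℝ × ℝ =>
          ∫ x in Ioi (-1 : ℝ),
            (x * (1 + q.1 * x) ^ (-q.2) - x - q.2 * x ^ 2 * (1 + q.1 * x) ^ (-(1 + q.2))) ∂F)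
          (π₀, p₀) ∧
        ContinuousAt (fun q : ℝ × ℝ =>
          ∫ x in Ioi (-1 : ℝ),
            (-(q.1 * x) * (1 + q.1 * x) ^ (-q.2) * Real.log (1 + q.1 * x)) ∂F)
          (π₀, p₀) :=
  stmt11_general pa pb hpa F hFlevy hFx hFq
end

section
/- Let 0 < p_a < p < p_b, b ∈ ℝ, c ≥ 0, and let F be a Lévy measure on ℝ with F((−∞,−1]) = 0 such that ∫_{(1,∞)} x dF(x) < ∞ and ∫_{(1,∞)} (1+x)^{1−q} dF(x) < ∞ for every q ∈ (p_a, p_b). Define G(π,p) := πb − pπ²c + ∫_{(−1,∞)} (πx(1+πx)^{−p} − πx) dF(x). Let π₀ ≠ 0 lie in the interior of A := {π ∈ ℝ : F({x : 1 + πx ≤ 0}) = 0} and suppose G(π₀,p) = 0. Then the map π ↦ G(π,p) is differentiable at π₀ and its derivative equals −pπ₀ ( c + ∫_{(−1,∞)} x² (1+π₀x)^{−p−1} dF(x) ), where the integral is finite; in particular the sign of this derivative is opposite to the sign of π₀ whenever c > 0. -/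
open MeasureTheory Set Filter
open scoped ENNReal Topology

/-!
Near an interior point `π₀` of the admissible set, `1 + π x` is bounded below, uniformly for `π`
near `π₀` and `F`-a.e. `x`, both by a positive constant and by a multiple of `|x|`. Hence the
`π`-derivative of the integrand is dominated by `C x²` for `x ≤ 1` (mean value theorem) and by
`C (1 + x) ^ (1 - p) + x` for `x > 1`, which are integrable by the Lévy and moment conditions, so
one may differentiate under the integral sign. At a zero of `G` the first-order terms cancel,
`b + ∫ (x (1 + π₀ x) ^ (-p) - x) dF = p π₀ c`, leaving `-p π₀ (c + ∫ x² (1 + π₀ x) ^ (-p - 1) dF)`.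
-/

noncomputable def jumpTerm (p π x : ℝ) : ℝ := x * (1 + π * x) ^ (-p) - x

noncomputable def jumpCurvature (p π x : ℝ) : ℝ := x ^ 2 * (1 + π * x) ^ (-p - 1)

lemma hasDerivAt_mul_jumpTerm {p π x : ℝ} (h : 0 < 1 + π * x) :
    HasDerivAt (fun π => π * x * (1 + π * x) ^ (-p) - π * x)
      (jumpTerm p π x - p * π * jumpCurvature p π x) π := by
  have hlin : HasDerivAt (fun π : ℝ => 1 + π * x) x π := by
    simpa using ((hasDerivAt_id π).mul_const x).const_add 1
  have hpow := hlin.rpow_const (p := -p) (Or.inl h.ne')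
  have hid : HasDerivAt (fun π : ℝ => π * x) x π := by simpa using (hasDerivAt_id π).mul_const x
  refine ((hid.mul hpow).sub hid).congr_deriv ?_
  simp only [jumpTerm, jumpCurvature]
  ring

lemma jumpCurvature_nonneg {p π x : ℝ} (h : 0 ≤ 1 + π * x) : 0 ≤ jumpCurvature p π x :=
  mul_nonneg (sq_nonneg x) (Real.rpow_nonneg h _)

lemma le_one_add_mul_of_abs_sub_le {η π₀ π x : ℝ} (hη : 0 < η)
    (hl : 0 < 1 + (π₀ - η) * x) (hr : 0 < 1 + (π₀ + η) * x) (hπ : |π - π₀| ≤ η / 2) :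
    η / (2 * (|π₀| + η)) ≤ 1 + π * x ∧ η * |x| ≤ 2 * (1 + π * x) := by
  obtain ⟨h1, h2⟩ := abs_le.mp hπ
  -- `1 + π x` is at least `(3 a + b) / 4` or `(a + 3 b) / 4`, where `a, b > 0` are its values
  -- at `π₀ ∓ η`
  have hmid : η * |x| ≤ 2 * (1 + π * x) ∧ 1 + π₀ * x ≤ 2 * (1 + π * x) := by
    rcases abs_cases x with ⟨hx, hx0⟩ | ⟨hx, hx0⟩ <;> rw [hx]
    · have : (π₀ - η / 2) * x ≤ π * x := mul_le_mul_of_nonneg_right (by linarith) hx0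
      constructor <;> nlinarith
    · have : (π₀ + η / 2) * x ≤ π * x := mul_le_mul_of_nonpos_right (by linarith) hx0.le
      constructor <;> nlinarith
  refine ⟨?_, hmid.1⟩
  have hπ₀x : -(|π₀| * |x|) ≤ π₀ * x := by rw [← abs_mul]; exact neg_abs_le _
  rw [div_le_iff₀ (by positivity)]
  nlinarith [abs_nonneg π₀, abs_nonneg x]

lemma abs_one_add_rpow_neg_sub_one_le {p δ y : ℝ} (hp : 0 ≤ p) (hδ : 0 < δ) (hδ1 : δ ≤ 1)
    (hy : δ ≤ 1 + y) : |(1 + y) ^ (-p) - 1| ≤ p * δ ^ (-p - 1) * |y| := by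
  have hderiv : ∀ z ∈ Ici (δ - 1), HasDerivWithinAt (fun z => (1 + z) ^ (-p))
      (-p * (1 + z) ^ (-p - 1)) (Ici (δ - 1)) z := by
    intro z hz
    have hz : 0 < 1 + z := by linarith [mem_Ici.mp hz]
    simpa using
      (((hasDerivAt_id z).const_add 1).rpow_const (p := -p) (Or.inl hz.ne')).hasDerivWithinAt
  have hbound : ∀ z ∈ Ici (δ - 1), ‖-p * (1 + z) ^ (-p - 1)‖ ≤ p * δ ^ (-p - 1) := by
    intro z hz
    have hz : δ ≤ 1 + z := by linarith [mem_Ici.mp hz]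
    rw [norm_mul, norm_neg, Real.norm_of_nonneg hp,
      Real.norm_of_nonneg (Real.rpow_nonneg (by linarith) _)]
    exact mul_le_mul_of_nonneg_left (Real.rpow_le_rpow_of_nonpos hδ hz (by linarith)) hp
  simpa using Convex.norm_image_sub_le_of_norm_hasDerivWithin_le hderiv hbound (convex_Ici _)
    (x := 0) (y := y) (by simp; linarith) (by simp; linarith)

section Bounds

variable {p δ κ π x : ℝ}

lemma abs_jumpTerm_le_of_le (hp : 0 ≤ p) (hδ : 0 < δ) (hδ1 : δ ≤ 1) (h : δ ≤ 1 + π * x) :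
    |jumpTerm p π x| ≤ p * |π| * δ ^ (-p - 1) * x ^ 2 := by
  have hrw : jumpTerm p π x = x * ((1 + π * x) ^ (-p) - 1) := by rw [jumpTerm]; ring
  rw [hrw, abs_mul]
  calc |x| * |(1 + π * x) ^ (-p) - 1| ≤ |x| * (p * δ ^ (-p - 1) * |π * x|) :=
        mul_le_mul_of_nonneg_left (abs_one_add_rpow_neg_sub_one_le hp hδ hδ1 h) (abs_nonneg x)
    _ = p * |π| * δ ^ (-p - 1) * x ^ 2 := by rw [abs_mul, ← sq_abs x]; ring

lemma jumpCurvature_le_of_le (hp : 0 ≤ p) (hδ : 0 < δ) (h : δ ≤ 1 + π * x) :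
    jumpCurvature p π x ≤ δ ^ (-p - 1) * x ^ 2 := by
  rw [jumpCurvature, mul_comm]
  exact mul_le_mul_of_nonneg_right (Real.rpow_le_rpow_of_nonpos hδ h (by linarith)) (sq_nonneg x)

lemma abs_jumpTerm_le_of_mul_le (hp : 0 ≤ p) (hκ : 0 < κ) (hx : 0 ≤ x)
    (h : κ * (1 + x) ≤ 1 + π * x) : |jumpTerm p π x| ≤ κ ^ (-p) * (1 + x) ^ (1 - p) + x := by
  have hpos : 0 < 1 + π * x := by nlinarith
  have hle : (1 + π * x) ^ (-p) ≤ κ ^ (-p) * (1 + x) ^ (-p) := by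
    rw [← Real.mul_rpow hκ.le (by linarith)]
    exact Real.rpow_le_rpow_of_nonpos (by positivity) h (by linarith)
  have hsplit : (1 + x) ^ (1 - p) = (1 + x) * (1 + x) ^ (-p) := by
    rw [sub_eq_add_neg, Real.rpow_add (by linarith), Real.rpow_one]
  have hnn : 0 ≤ x * (1 + π * x) ^ (-p) := mul_nonneg hx (Real.rpow_nonneg hpos.le _)
  have hmain : x * (1 + π * x) ^ (-p) ≤ κ ^ (-p) * (1 + x) ^ (1 - p) := by
    rw [hsplit]
    calc x * (1 + π * x) ^ (-p) ≤ (1 + x) * (κ ^ (-p) * (1 + x) ^ (-p)) :=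
          mul_le_mul (by linarith) hle (Real.rpow_nonneg hpos.le _) (by linarith)
      _ = κ ^ (-p) * ((1 + x) * (1 + x) ^ (-p)) := by ring
  rw [jumpTerm, abs_le]
  constructor <;> linarith

lemma jumpCurvature_le_of_mul_le (hp : 0 ≤ p) (hκ : 0 < κ) (hx : 0 ≤ x)
    (h : κ * (1 + x) ≤ 1 + π * x) : jumpCurvature p π x ≤ κ ^ (-p - 1) * (1 + x) ^ (1 - p) := by
  have hle : (1 + π * x) ^ (-p - 1) ≤ κ ^ (-p - 1) * (1 + x) ^ (-p - 1) := by
    rw [← Real.mul_rpow hκ.le (by linarith)]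
    exact Real.rpow_le_rpow_of_nonpos (by positivity) h (by linarith)
  have hsplit : (1 + x) ^ (1 - p) = (1 + x) ^ 2 * (1 + x) ^ (-p - 1) := by
    rw [show 1 - p = (2 : ℕ) + (-p - 1) by push_cast; ring, Real.rpow_add (by linarith),
      Real.rpow_natCast]
  rw [jumpCurvature, hsplit]
  calc x ^ 2 * (1 + π * x) ^ (-p - 1) ≤ (1 + x) ^ 2 * (κ ^ (-p - 1) * (1 + x) ^ (-p - 1)) :=
        mul_le_mul (by nlinarith) hle (Real.rpow_nonneg (by nlinarith) _) (sq_nonneg _)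
    _ = κ ^ (-p - 1) * ((1 + x) ^ 2 * (1 + x) ^ (-p - 1)) := by ring

end Bounds

/-- The constants come from `le_one_add_mul_of_abs_sub_le`: `1 + π x ≥ η / (2 (|π₀| + η))` for all
`x`, and `1 + π x ≥ η (1 + x) / 4` for `x > 1`. -/
noncomputable def jumpDominant (p π₀ η x : ℝ) : ℝ :=
  if x ≤ 1 then (1 + p * (|π₀| + η)) * (η / (2 * (|π₀| + η))) ^ (-p - 1) * x ^ 2
  else ((η / 4) ^ (-p) + (η / 4) ^ (-p - 1)) * (1 + x) ^ (1 - p) + x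

lemma jumpTerm_jumpCurvature_le_jumpDominant {p η π₀ π x : ℝ} (hp : 0 ≤ p) (hη : 0 < η)
    (hl : 0 < 1 + (π₀ - η) * x) (hr : 0 < 1 + (π₀ + η) * x) (hπ : |π - π₀| ≤ η / 2) :
    |jumpTerm p π x| ≤ jumpDominant p π₀ η x ∧
      0 ≤ jumpCurvature p π x ∧ jumpCurvature p π x ≤ jumpDominant p π₀ η x := by
  obtain ⟨hδ, hgrow⟩ := le_one_add_mul_of_abs_sub_le hη hl hr hπ
  set δ := η / (2 * (|π₀| + η))
  have hδpos : 0 < δ := by positivity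
  have hpos : 0 < 1 + π * x := hδpos.trans_le hδ
  have hv0 := jumpCurvature_nonneg (p := p) hpos.le
  have hM : p * |π| ≤ 1 + p * (|π₀| + η) := by
    have : |π| ≤ |π₀| + η := by linarith [abs_sub_abs_le_abs_sub π π₀]
    nlinarith
  have hκ : 0 < η / 4 := by positivity
  have hlarge (hx : ¬x ≤ 1) : η / 4 * (1 + x) ≤ 1 + π * x := by
    rw [abs_of_pos (by linarith)] at hgrow
    nlinarith
  refine ⟨?_, hv0, ?_⟩ <;> unfold jumpDominant <;> split_ifs with hx
  · have hδ1 : δ ≤ 1 := by rw [div_le_one (by positivity)]; linarith [abs_nonneg π₀]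
    calc |jumpTerm p π x| ≤ p * |π| * δ ^ (-p - 1) * x ^ 2 :=
          abs_jumpTerm_le_of_le hp hδpos hδ1 hδ
      _ ≤ _ := by gcongr
  · have hq : 0 ≤ (η / 4) ^ (-p - 1) * (1 + x) ^ (1 - p) := by
      have : 0 < 1 + x := by linarith
      positivity
    linarith [abs_jumpTerm_le_of_mul_le hp hκ (by linarith) (hlarge hx)]
  · calc jumpCurvature p π x ≤ δ ^ (-p - 1) * x ^ 2 := jumpCurvature_le_of_le hp hδpos hδ
      _ ≤ _ := by
        gcongr
        exact le_mul_of_one_le_left (by positivity) (by nlinarith [abs_nonneg π₀])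
  · have hq : 0 ≤ (η / 4) ^ (-p) * (1 + x) ^ (1 - p) := by
      have : 0 < 1 + x := by linarith
      positivity
    linarith [jumpCurvature_le_of_mul_le hp hκ (by linarith) (hlarge hx)]

lemma integrableOn_sq_Icc_of_lintegral_min_ne_top {F : Measure ℝ}
    (hF : ∫⁻ x, ENNReal.ofReal (min (x ^ 2) 1) ∂F ≠ ∞) :
    IntegrableOn (fun x => x ^ 2) (Icc (-1) 1) F := by
  have hmin : Integrable (fun x : ℝ => min (x ^ 2) 1) F :=
    ⟨by fun_prop, (hasFiniteIntegral_iff_ofReal (ae_of_all _ fun x => by positivity)).mpr hF.lt_top⟩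
  refine hmin.integrableOn.congr_fun (fun x hx => min_eq_left ?_) measurableSet_Icc
  nlinarith [hx.1, hx.2]

lemma integrableOn_jumpDominant {F : Measure ℝ} {p π₀ η : ℝ}
    (hF : ∫⁻ x, ENNReal.ofReal (min (x ^ 2) 1) ∂F ≠ ∞)
    (hFx : IntegrableOn (fun x => x) (Ioi 1) F)
    (hFp : IntegrableOn (fun x => (1 + x) ^ (1 - p)) (Ioi 1) F) :
    IntegrableOn (jumpDominant p π₀ η) (Ioi (-1)) F := by
  unfold jumpDominant
  generalize (1 + p * (|π₀| + η)) * (η / (2 * (|π₀| + η))) ^ (-p - 1) = A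
  generalize (η / 4) ^ (-p) + (η / 4) ^ (-p - 1) = B
  rw [← Ioc_union_Ioi_eq_Ioi (by norm_num : (-1 : ℝ) ≤ 1)]
  refine IntegrableOn.union ?_ ?_
  · refine IntegrableOn.congr_fun
      (((integrableOn_sq_Icc_of_lintegral_min_ne_top hF).mono_set Ioc_subset_Icc_self).const_mul A)
      (fun x hx => ?_) measurableSet_Ioc
    simp [hx.2]
  · refine IntegrableOn.congr_fun ((hFp.const_mul B).add hFx) (fun x hx => ?_) measurableSet_Ioi
    simp [not_le.mpr (mem_Ioi.mp hx)]

lemma exists_pos_ae_one_add_mul_pos {F : Measure ℝ} {π₀ : ℝ}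
    (h : π₀ ∈ interior {π : ℝ | F {x | 1 + π * x ≤ 0} = 0}) :
    ∃ η > 0, ∀ᵐ x ∂F, 0 < 1 + (π₀ - η) * x ∧ 0 < 1 + (π₀ + η) * x := by
  obtain ⟨ε, hε, hball⟩ := Metric.mem_nhds_iff.mp (mem_interior_iff_mem_nhds.mp h)
  have hae {π : ℝ} (hπ : |π - π₀| < ε) : ∀ᵐ x ∂F, 0 < 1 + π * x := by
    have : F {x | 1 + π * x ≤ 0} = 0 := hball (by rwa [Metric.mem_ball, Real.dist_eq])
    simpa [ae_iff, not_lt] using this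
  refine ⟨ε / 2, by positivity, (hae ?_).and (hae ?_)⟩ <;>
    simp [abs_of_pos (half_pos hε)] <;> linarith

section Derivative

variable {μ : Measure ℝ} {p π₀ η : ℝ}

lemma integrable_jumpTerm (hp : 0 ≤ p) (hη : 0 < η)
    (hadm : ∀ᵐ x ∂μ, 0 < 1 + (π₀ - η) * x ∧ 0 < 1 + (π₀ + η) * x)
    (hD : Integrable (jumpDominant p π₀ η) μ) : Integrable (jumpTerm p π₀) μ := by
  refine hD.mono' (by unfold jumpTerm; fun_prop) (hadm.mono fun x hx => ?_)
  exact (jumpTerm_jumpCurvature_le_jumpDominant hp hη hx.1 hx.2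
    (by rw [sub_self, abs_zero]; positivity)).1

lemma integrable_jumpCurvature (hp : 0 ≤ p) (hη : 0 < η)
    (hadm : ∀ᵐ x ∂μ, 0 < 1 + (π₀ - η) * x ∧ 0 < 1 + (π₀ + η) * x)
    (hD : Integrable (jumpDominant p π₀ η) μ) : Integrable (jumpCurvature p π₀) μ := by
  refine hD.mono' (by unfold jumpCurvature; fun_prop) (hadm.mono fun x hx => ?_)
  obtain ⟨-, h0, hle⟩ :=
    jumpTerm_jumpCurvature_le_jumpDominant hp hη hx.1 hx.2 (by rw [sub_self, abs_zero]; positivity)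
  rwa [Real.norm_of_nonneg h0]

lemma hasDerivAt_integral_mul_jumpTerm (hp : 0 ≤ p) (hη : 0 < η)
    (hadm : ∀ᵐ x ∂μ, 0 < 1 + (π₀ - η) * x ∧ 0 < 1 + (π₀ + η) * x)
    (hD : Integrable (jumpDominant p π₀ η) μ) :
    HasDerivAt (fun π => ∫ x, (π * x * (1 + π * x) ^ (-p) - π * x) ∂μ)
      ((∫ x, jumpTerm p π₀ x ∂μ) - p * π₀ * ∫ x, jumpCurvature p π₀ x ∂μ) π₀ := by
  have hnear : ∀ᵐ x ∂μ, ∀ π ∈ Metric.closedBall π₀ (η / 2),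
      |jumpTerm p π x| ≤ jumpDominant p π₀ η x ∧
        0 ≤ jumpCurvature p π x ∧ jumpCurvature p π x ≤ jumpDominant p π₀ η x :=
    hadm.mono fun x hx π hπ => jumpTerm_jumpCurvature_le_jumpDominant hp hη hx.1 hx.2
      (by rwa [Metric.mem_closedBall, Real.dist_eq] at hπ)
  have hbound : ∀ᵐ x ∂μ, ∀ π ∈ Metric.closedBall π₀ (η / 2),
      ‖jumpTerm p π x - p * π * jumpCurvature p π x‖ ≤
        (1 + p * (|π₀| + η)) * jumpDominant p π₀ η x := by
    refine hnear.mono fun x hx π hπ => ?_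
    obtain ⟨hu, hv0, hv⟩ := hx π hπ
    rw [Metric.mem_closedBall, Real.dist_eq] at hπ
    have hπM : |π| ≤ |π₀| + η := by linarith [abs_sub_abs_le_abs_sub π π₀]
    have hD0 : 0 ≤ jumpDominant p π₀ η x := (abs_nonneg _).trans hu
    calc ‖jumpTerm p π x - p * π * jumpCurvature p π x‖
        ≤ |jumpTerm p π x| + p * |π| * jumpCurvature p π x := by
          rw [Real.norm_eq_abs]
          refine (abs_sub _ _).trans (add_le_add_right (le_of_eq ?_) _)
          rw [abs_mul, abs_mul, abs_of_nonneg hp, abs_of_nonneg hv0]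
      _ ≤ jumpDominant p π₀ η x + p * (|π₀| + η) * jumpDominant p π₀ η x := by gcongr
      _ = (1 + p * (|π₀| + η)) * jumpDominant p π₀ η x := by ring
  have hderiv : ∀ᵐ x ∂μ, ∀ π ∈ Metric.closedBall π₀ (η / 2),
      HasDerivAt (fun π => π * x * (1 + π * x) ^ (-p) - π * x)
        (jumpTerm p π x - p * π * jumpCurvature p π x) π :=
    hadm.mono fun x hx π hπ => hasDerivAt_mul_jumpTerm <|
      (by positivity : 0 < η / (2 * (|π₀| + η))).trans_le
        (le_one_add_mul_of_abs_sub_le hη hx.1 hx.2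
          (by rwa [Metric.mem_closedBall, Real.dist_eq] at hπ)).1
  have hφ : Integrable (fun x => π₀ * x * (1 + π₀ * x) ^ (-p) - π₀ * x) μ :=
    ((integrable_jumpTerm hp hη hadm hD).const_mul π₀).congr
      (ae_of_all _ fun x => by simp only [jumpTerm]; ring)
  have h := (hasDerivAt_integral_of_dominated_loc_of_deriv_le
    (Metric.closedBall_mem_nhds π₀ (by positivity : 0 < η / 2))
    (Eventually.of_forall fun π => by fun_prop) hφ
    (by unfold jumpTerm jumpCurvature; fun_prop) hbound (hD.const_mul _) hderiv).2
  rwa [integral_sub (integrable_jumpTerm hp hη hadm hD)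
    ((integrable_jumpCurvature hp hη hadm hD).const_mul _), integral_const_mul] at h

end Derivative

theorem stmt12_general (pa pb p b c : ℝ) (hpa : 0 < pa) (hpap : pa < p) (hppb : p < pb)
    (F : Measure ℝ)
    (hFlevy : ∫⁻ x, ENNReal.ofReal (min (x ^ 2) 1) ∂F ≠ ∞)
    (hFx : IntegrableOn (fun x => x) (Ioi (1 : ℝ)) F)
    (hFq : ∀ q ∈ Ioo pa pb, IntegrableOn (fun x => (1 + x) ^ (1 - q)) (Ioi (1 : ℝ)) F)
    (π₀ : ℝ) (hπ₀ : π₀ ∈ interior {π : ℝ | F {x | 1 + π * x ≤ 0} = 0}) (hπ₀ne : π₀ ≠ 0)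
    (hG0 : π₀ * b - p * π₀ ^ 2 * c +
      ∫ x in Ioi (-1 : ℝ), (π₀ * x * (1 + π₀ * x) ^ (-p) - π₀ * x) ∂F = 0) :
    IntegrableOn (fun x => x ^ 2 * (1 + π₀ * x) ^ (-p - 1)) (Ioi (-1 : ℝ)) F ∧
    HasDerivAt
      (fun π => π * b - p * π ^ 2 * c +
        ∫ x in Ioi (-1 : ℝ), (π * x * (1 + π * x) ^ (-p) - π * x) ∂F)
      (-(p * π₀) * (c + ∫ x in Ioi (-1 : ℝ), x ^ 2 * (1 + π₀ * x) ^ (-p - 1) ∂F)) π₀ ∧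
    (0 < c →
      (0 < π₀ →
        -(p * π₀) * (c + ∫ x in Ioi (-1 : ℝ), x ^ 2 * (1 + π₀ * x) ^ (-p - 1) ∂F) < 0) ∧
      (π₀ < 0 →
        0 < -(p * π₀) * (c + ∫ x in Ioi (-1 : ℝ), x ^ 2 * (1 + π₀ * x) ^ (-p - 1) ∂F))) := by
  have hp : 0 < p := hpa.trans hpap
  obtain ⟨η, hη, hadm⟩ := exists_pos_ae_one_add_mul_pos hπ₀
  have hadm' := ae_restrict_of_ae (s := Ioi (-1)) hadm
  have hD := integrableOn_jumpDominant (π₀ := π₀) (η := η) hFlevy hFx (hFq p ⟨hpap, hppb⟩)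
  have hJ : 0 ≤ ∫ x in Ioi (-1 : ℝ), x ^ 2 * (1 + π₀ * x) ^ (-p - 1) ∂F :=
    integral_nonneg_of_ae (hadm'.mono fun x hx => jumpCurvature_nonneg (by linarith [hx.1, hx.2]))
  have hbalance : b + ∫ x in Ioi (-1 : ℝ), jumpTerm p π₀ x ∂F = p * π₀ * c := by
    have hfactor : ∫ x in Ioi (-1 : ℝ), (π₀ * x * (1 + π₀ * x) ^ (-p) - π₀ * x) ∂F =
        π₀ * ∫ x in Ioi (-1 : ℝ), jumpTerm p π₀ x ∂F := by
      rw [← integral_const_mul]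
      exact integral_congr_ae (ae_of_all _ fun x => by simp only [jumpTerm]; ring)
    rw [hfactor] at hG0
    apply mul_left_cancel₀ hπ₀ne
    linear_combination hG0
  have hpoly : HasDerivAt (fun π : ℝ => π * b - p * π ^ 2 * c) (b - 2 * p * π₀ * c) π₀ := by
    refine (((hasDerivAt_id' π₀).mul_const b).sub
      (((hasDerivAt_pow 2 π₀).const_mul p).mul_const c)).congr_deriv ?_
    push_cast
    ring
  refine ⟨integrable_jumpCurvature hp.le hη hadm' hD,
    (hpoly.add (hasDerivAt_integral_mul_jumpTerm hp.le hη hadm' hD)).congr_deriv ?_,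
    fun hc' => ⟨fun hπ => ?_, fun hπ => ?_⟩⟩
  · simp only [jumpCurvature]
    linear_combination hbalance
  · exact mul_neg_of_neg_of_pos (neg_neg_of_pos (mul_pos hp hπ)) (by linarith)
  · exact mul_pos (neg_pos.mpr (mul_neg_of_pos_of_neg hp hπ)) (by linarith)

theorem stmt12 (pa pb p b c : ℝ) (hpa : 0 < pa) (hpap : pa < p) (hppb : p < pb) (hc : 0 ≤ c)
    (F : Measure ℝ)
    (hF0 : F {0} = 0)
    (hFlevy : ∫⁻ x, ENNReal.ofReal (min (x ^ 2) 1) ∂F ≠ ∞)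
    (hFneg : F (Iic (-1 : ℝ)) = 0)
    (hFx : IntegrableOn (fun x => x) (Ioi (1 : ℝ)) F)
    (hFq : ∀ q ∈ Ioo pa pb, IntegrableOn (fun x => (1 + x) ^ (1 - q)) (Ioi (1 : ℝ)) F)
    (π₀ : ℝ) (hπ₀ : π₀ ∈ interior {π : ℝ | F {x | 1 + π * x ≤ 0} = 0}) (hπ₀ne : π₀ ≠ 0)
    (hG0 : π₀ * b - p * π₀ ^ 2 * c +
      ∫ x in Ioi (-1 : ℝ), (π₀ * x * (1 + π₀ * x) ^ (-p) - π₀ * x) ∂F = 0) :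
    IntegrableOn (fun x => x ^ 2 * (1 + π₀ * x) ^ (-p - 1)) (Ioi (-1 : ℝ)) F ∧
    HasDerivAt
      (fun π => π * b - p * π ^ 2 * c +
        ∫ x in Ioi (-1 : ℝ), (π * x * (1 + π * x) ^ (-p) - π * x) ∂F)
      (-(p * π₀) * (c + ∫ x in Ioi (-1 : ℝ), x ^ 2 * (1 + π₀ * x) ^ (-p - 1) ∂F)) π₀ ∧
    (0 < c →
      (0 < π₀ →
        -(p * π₀) * (c + ∫ x in Ioi (-1 : ℝ), x ^ 2 * (1 + π₀ * x) ^ (-p - 1) ∂F) < 0) ∧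
      (π₀ < 0 →
        0 < -(p * π₀) * (c + ∫ x in Ioi (-1 : ℝ), x ^ 2 * (1 + π₀ * x) ^ (-p - 1) ∂F))) :=
  stmt12_general pa pb p b c hpa hpap hppb F hFlevy hFx hFq π₀ hπ₀ hπ₀ne hG0
end

section
/- Let p ∈ (0,1), N ∈ ℕ, and let Z_0, …, Z_{N−1} be independent identically distributed random variables on a probability space (Ω, F, P) with Z_0 ≥ −1 almost surely and E[(1 + Z_0)^{1−p}] < ∞. For i = 0, …, N−1 let F_i be the σ-algebra generated by Z_0, …, Z_{i−1} (with F_0 trivial). Then the supremum over all strategies (π_0, …, π_{N−1}), where each π_i : Ω → [0,1] is F_i-measurable, of E[∏_{i=0}^{N−1} (1 + π_i Z_i)^{1−p}] equals ( max_{π ∈ [0,1]} E[(1 + π Z_0)^{1−p}] )^N; moreover the maximum over π ∈ [0,1] is attained, and the constant strategy π_i ≡ π*, with π* a maximizer of π ↦ E[(1 + π Z_0)^{1−p}] on [0,1], attains the supremum. -/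
/-!
Condition on the past: since `Z n` is independent of `σ(Z 0, …, Z (n-1))` while the fraction
`π n` and the wealth so far are measurable with respect to it, the expected next-period factor
`(1 + π n * Z n) ^ (1 - p)` can be computed with `π n` frozen at a constant `t ∈ [0, 1]`, and is
then at most `M = max_t E[(1 + t Z 0) ^ (1 - p)]`. Induction bounds the expected utility of any
predictable strategy by `M ^ N`; the constant maximizing strategy attains it because its factors
are i.i.d. The bound is carried out for lower Lebesgue integrals of the nonnegative wealth, which
needs no integrability.
-/

open MeasureTheory Set ProbabilityTheory
open scoped ENNReal

lemma one_add_mul_nonneg_of_mem_Icc {t z : ℝ} (ht : t ∈ Icc (0:ℝ) 1) (hz : -1 ≤ z) :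
    0 ≤ 1 + t * z := by
  nlinarith [mul_nonneg ht.1 (show 0 ≤ 1 + z by linarith), ht.2]

lemma rpow_one_add_mul_le {e t z : ℝ} (he : 0 ≤ e) (ht : t ∈ Icc (0:ℝ) 1) (hz : -1 ≤ z) :
    (1 + t * z) ^ e ≤ 1 + (1 + z) ^ e := by
  have hconv : 1 + t * z ≤ max 1 (1 + z) := by
    rcases le_total z 0 with h | h
    · exact le_max_of_le_left (by nlinarith [ht.1])
    · exact le_max_of_le_right (by nlinarith [ht.2])
  have hz' : 0 ≤ (1 + z) ^ e := Real.rpow_nonneg (by linarith) e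
  refine (Real.rpow_le_rpow (one_add_mul_nonneg_of_mem_Icc ht hz) hconv he).trans ?_
  rcases max_cases 1 (1 + z) with ⟨h, -⟩ | ⟨h, -⟩ <;> rw [h]
  · rw [Real.one_rpow]; linarith
  · linarith

section OnePeriod

variable {Ω : Type*} [MeasurableSpace Ω] {μ : Measure Ω}
  {W : Ω → ℝ} {e : ℝ}

lemma ae_norm_rpow_one_add_mul_le (he : 0 ≤ e) (hge : ∀ᵐ ω ∂μ, -1 ≤ W ω) {t : ℝ}
    (ht : t ∈ Icc (0:ℝ) 1) : ∀ᵐ ω ∂μ, ‖(1 + t * W ω) ^ e‖ ≤ 1 + (1 + W ω) ^ e := by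
  filter_upwards [hge] with ω hω
  rw [Real.norm_of_nonneg (Real.rpow_nonneg (one_add_mul_nonneg_of_mem_Icc ht hω) e)]
  exact rpow_one_add_mul_le he ht hω

lemma integrable_rpow_one_add_mul [IsFiniteMeasure μ] (hW : Measurable W) (hge : ∀ᵐ ω ∂μ, -1 ≤ W ω)
    (hint : Integrable (fun ω => (1 + W ω) ^ e) μ) (he : 0 ≤ e) {t : ℝ}
    (ht : t ∈ Icc (0:ℝ) 1) : Integrable (fun ω => (1 + t * W ω) ^ e) μ :=
  ((integrable_const 1).add hint).mono' (by fun_prop) (ae_norm_rpow_one_add_mul_le he hge ht)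

lemma continuousOn_integral_rpow_one_add_mul [IsFiniteMeasure μ] (hW : Measurable W)
    (hge : ∀ᵐ ω ∂μ, -1 ≤ W ω) (hint : Integrable (fun ω => (1 + W ω) ^ e) μ) (he : 0 ≤ e) :
    ContinuousOn (fun t => ∫ ω, (1 + t * W ω) ^ e ∂μ) (Icc 0 1) :=
  continuousOn_of_dominated (fun _ _ => by fun_prop)
    (fun _ ht => ae_norm_rpow_one_add_mul_le he hge ht) ((integrable_const 1).add hint)
    (ae_of_all _ fun _ => ((Real.continuous_rpow_const he).comp (by fun_prop)).continuousOn)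

end OnePeriod

section Freezing

variable {Ω α β : Type*} {m mΩ : MeasurableSpace Ω} [MeasurableSpace α] [MeasurableSpace β]
  {μ : Measure Ω} [IsFiniteMeasure μ] {X : Ω → α} {Y : Ω → β}

theorem ProbabilityTheory.IndepFun.lintegral_comp_eq_lintegral_lintegral
    (hXY : IndepFun X Y μ) (hX : Measurable X) (hY : Measurable Y) {f : α × β → ℝ≥0∞}
    (hf : Measurable f) :
    ∫⁻ ω, f (X ω, Y ω) ∂μ = ∫⁻ ω, ∫⁻ ω', f (X ω, Y ω') ∂μ ∂μ := by
  rw [← lintegral_map hf (hX.prodMk hY),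
    (indepFun_iff_map_prod_eq_prod_map_map hX.aemeasurable hY.aemeasurable).1 hXY,
    lintegral_prod _ hf.aemeasurable, lintegral_map hf.lintegral_prod_right' hX]
  exact lintegral_congr fun ω => lintegral_map (hf.comp measurable_prodMk_left) hY

theorem lintegral_mul_comp_le_of_indep (hm : m ≤ mΩ)
    (hindep : Indep m (MeasurableSpace.comap Y ‹_›) μ) (hY : Measurable Y)
    (hX : Measurable[m] X) {g : Ω → ℝ≥0∞} (hg : Measurable[m] g) {f : α → β → ℝ≥0∞}
    (hf : Measurable (Function.uncurry f)) {M : ℝ≥0∞}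
    (hM : ∀ ω, ∫⁻ ω', f (X ω) (Y ω') ∂μ ≤ M) :
    ∫⁻ ω, g ω * f (X ω) (Y ω) ∂μ ≤ (∫⁻ ω, g ω ∂μ) * M := by
  have hgX : IndepFun (fun ω => (g ω, X ω)) Y μ :=
    indep_of_indep_of_le_left hindep (hg.prodMk hX).comap_le
  calc ∫⁻ ω, g ω * f (X ω) (Y ω) ∂μ
      = ∫⁻ ω, ∫⁻ ω', g ω * f (X ω) (Y ω') ∂μ ∂μ :=
        hgX.lintegral_comp_eq_lintegral_lintegral ((hg.mono hm le_rfl).prodMk (hX.mono hm le_rfl))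
          hY (f := fun q => q.1.1 * f q.1.2 q.2) (by fun_prop)
    _ = ∫⁻ ω, g ω * ∫⁻ ω', f (X ω) (Y ω') ∂μ ∂μ :=
        lintegral_congr fun ω => lintegral_const_mul _ (hf.comp (measurable_const.prodMk hY))
    _ ≤ ∫⁻ ω, g ω * M ∂μ := lintegral_mono fun ω => by gcongr; exact hM ω
    _ = (∫⁻ ω, g ω ∂μ) * M := lintegral_mul_const _ (hg.mono hm le_rfl)

end Freezing

section Predictable

variable {Ω α β : Type*} {mΩ : MeasurableSpace Ω} [MeasurableSpace α] [mβ : MeasurableSpace β]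
  {μ : Measure Ω} {Z : ℕ → Ω → β}

abbrev pastSigma (Z : ℕ → Ω → β) (n : ℕ) : MeasurableSpace Ω :=
  ⨆ j ∈ Finset.range n, MeasurableSpace.comap (Z j) mβ

lemma pastSigma_le (hZ : ∀ i, Measurable (Z i)) (n : ℕ) : pastSigma Z n ≤ mΩ :=
  iSup₂_le fun j _ => (hZ j).comap_le

lemma pastSigma_mono : Monotone (pastSigma Z) := fun _ _ hab =>
  biSup_mono fun _ hj => Finset.mem_range.2 ((Finset.mem_range.1 hj).trans_le hab)

lemma measurable_pastSigma {j n : ℕ} (hj : j < n) : Measurable[pastSigma Z n] (Z j) :=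
  Measurable.of_comap_le (le_iSup₂ (f := fun j (_ : j ∈ Finset.range n) =>
    MeasurableSpace.comap (Z j) mβ) j (Finset.mem_range.2 hj))

lemma indep_pastSigma (hZ : ∀ i, Measurable (Z i)) (hind : iIndepFun Z μ) (n : ℕ) :
    Indep (pastSigma Z n) (MeasurableSpace.comap (Z n) mβ) μ := by
  have h := indep_iSup_of_disjoint (fun i => (hZ i).comap_le) hind
    (S := Iio n) (T := {n}) (by simp)
  simpa [pastSigma, iSup_singleton] using h

theorem lintegral_prod_le_pow_of_predictable [IsProbabilityMeasure μ]
    (hZ : ∀ i, Measurable (Z i)) (hind : iIndepFun Z μ) {π : ℕ → Ω → α}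
    {f : α → β → ℝ≥0∞} (hf : Measurable (Function.uncurry f)) {M : ℝ≥0∞} {n : ℕ}
    (hπ : ∀ i < n, Measurable[pastSigma Z i] (π i))
    (hM : ∀ i < n, ∀ ω, ∫⁻ ω', f (π i ω) (Z i ω') ∂μ ≤ M) :
    ∫⁻ ω, ∏ i ∈ Finset.range n, f (π i ω) (Z i ω) ∂μ ≤ M ^ n := by
  induction n with
  | zero => simp
  | succ n ih =>
    have hwealth : Measurable[pastSigma Z n] fun ω => ∏ i ∈ Finset.range n, f (π i ω) (Z i ω) :=
      Finset.measurable_prod _ fun i hi => by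
        have hi := Finset.mem_range.1 hi
        exact hf.comp (((hπ i (by omega)).mono (pastSigma_mono hi.le) le_rfl).prodMk
          (measurable_pastSigma hi))
    simp_rw [Finset.prod_range_succ]
    calc ∫⁻ ω, (∏ i ∈ Finset.range n, f (π i ω) (Z i ω)) * f (π n ω) (Z n ω) ∂μ
        ≤ (∫⁻ ω, ∏ i ∈ Finset.range n, f (π i ω) (Z i ω) ∂μ) * M :=
          lintegral_mul_comp_le_of_indep (pastSigma_le hZ n) (indep_pastSigma hZ hind n) (hZ n)
            (hπ n n.lt_succ_self) hwealth hf (hM n n.lt_succ_self)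
      _ ≤ M ^ n * M := by
          gcongr
          exact ih (fun i hi => hπ i (by omega)) (fun i hi => hM i (by omega))
      _ = M ^ (n + 1) := (pow_succ M n).symm

end Predictable

theorem integral_prod_range_comp_eq_pow {Ω β : Type*} {mΩ : MeasurableSpace Ω}
    [MeasurableSpace β] {μ : Measure Ω} {Z : ℕ → Ω → β} (hZ : ∀ i, Measurable (Z i))
    (hind : iIndepFun Z μ) (hident : ∀ i, IdentDistrib (Z i) (Z 0) μ μ) {g : β → ℝ}
    (hg : Measurable g) (n : ℕ) :
    ∫ ω, ∏ i ∈ Finset.range n, g (Z i ω) ∂μ = (∫ ω, g (Z 0 ω) ∂μ) ^ n := by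
  simp_rw [Finset.prod_range (fun i => g (Z i _))]
  rw [(hind.precomp Fin.val_injective).integral_fun_prod_comp (f := fun _ => g)
    (fun i => (hZ i).aemeasurable) (fun _ => hg.aestronglyMeasurable), ← Fin.prod_const]
  exact Fintype.prod_congr _ _ fun i => ((hident i).comp hg).integral_eq

theorem integral_prod_rpow_one_add_mul_le {Ω : Type*} [MeasurableSpace Ω] {μ : Measure Ω}
    [IsProbabilityMeasure μ] {Z : ℕ → Ω → ℝ} (hZ : ∀ i, Measurable (Z i))
    (hind : iIndepFun Z μ) (hident : ∀ i, IdentDistrib (Z i) (Z 0) μ μ)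
    (hge : ∀ᵐ ω ∂μ, -1 ≤ Z 0 ω) {e : ℝ} (he : 0 ≤ e)
    (hint : Integrable (fun ω => (1 + Z 0 ω) ^ e) μ) {M : ℝ}
    (hM : ∀ t ∈ Icc (0:ℝ) 1, ∫ ω, (1 + t * Z 0 ω) ^ e ∂μ ≤ M) {N : ℕ} {π : ℕ → Ω → ℝ}
    (hπ : ∀ i < N, Measurable[pastSigma Z i] (π i)) (hπ01 : ∀ i < N, ∀ ω, π i ω ∈ Icc (0:ℝ) 1) :
    ∫ ω, ∏ i ∈ Finset.range N, (1 + π i ω * Z i ω) ^ e ∂μ ≤ M ^ N := by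
  have hM0 : 0 ≤ M := zero_le_one.trans (by simpa using hM 0 (left_mem_Icc.2 zero_le_one))
  have hge_all : ∀ᵐ ω ∂μ, ∀ i, -1 ≤ Z i ω :=
    ae_all_iff.2 fun i => (hident i).symm.ae_snd (p := fun z => -1 ≤ z) measurableSet_Ici hge
  have hfactor_nonneg : ∀ᵐ ω ∂μ, ∀ i < N, 0 ≤ (1 + π i ω * Z i ω) ^ e := by
    filter_upwards [hge_all] with ω hω i hi
    exact Real.rpow_nonneg (one_add_mul_nonneg_of_mem_Icc (hπ01 i hi ω) (hω i)) e
  have hperiod : ∀ i, ∀ t ∈ Icc (0:ℝ) 1,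
      ∫⁻ ω, ENNReal.ofReal ((1 + t * Z i ω) ^ e) ∂μ ≤ ENNReal.ofReal M := fun i t ht =>
    calc ∫⁻ ω, ENNReal.ofReal ((1 + t * Z i ω) ^ e) ∂μ
        = ∫⁻ ω, ENNReal.ofReal ((1 + t * Z 0 ω) ^ e) ∂μ :=
          ((hident i).comp (u := fun z => ENNReal.ofReal ((1 + t * z) ^ e))
            (by fun_prop)).lintegral_eq
      _ = ENNReal.ofReal (∫ ω, (1 + t * Z 0 ω) ^ e ∂μ) :=
          (ofReal_integral_eq_lintegral_ofReal (integrable_rpow_one_add_mul (hZ 0) hge hint he ht)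
            (hge.mono fun ω hω => Real.rpow_nonneg (one_add_mul_nonneg_of_mem_Icc ht hω) e)).symm
      _ ≤ ENNReal.ofReal M := ENNReal.ofReal_le_ofReal (hM t ht)
  have hlint := lintegral_prod_le_pow_of_predictable hZ hind
    (f := fun t z => ENNReal.ofReal ((1 + t * z) ^ e)) (by fun_prop) hπ
    (fun i hi ω => hperiod i _ (hπ01 i hi ω))
  have hmeas : ∀ i < N, Measurable (π i) := fun i hi => (hπ i hi).mono (pastSigma_le hZ i) le_rfl
  rw [integral_eq_lintegral_of_nonneg_ae
    (hfactor_nonneg.mono fun ω hω => Finset.prod_nonneg fun i hi => hω i (Finset.mem_range.1 hi))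
    (Finset.aestronglyMeasurable_fun_prod _ fun i hi => by
      have := hmeas i (Finset.mem_range.1 hi); fun_prop)]
  calc (∫⁻ ω, ENNReal.ofReal (∏ i ∈ Finset.range N, (1 + π i ω * Z i ω) ^ e) ∂μ).toReal
      = (∫⁻ ω, ∏ i ∈ Finset.range N, ENNReal.ofReal ((1 + π i ω * Z i ω) ^ e) ∂μ).toReal := by
        congr 1
        refine lintegral_congr_ae (hfactor_nonneg.mono fun ω hω => ?_)
        exact ENNReal.ofReal_prod_of_nonneg fun i hi => hω i (Finset.mem_range.1 hi)
    _ ≤ (ENNReal.ofReal M ^ N).toReal := ENNReal.toReal_mono (by simp) hlint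
    _ = M ^ N := by rw [← ENNReal.ofReal_pow hM0, ENNReal.toReal_ofReal (pow_nonneg hM0 N)]

theorem stmt15 {Ω : Type*} [MeasurableSpace Ω] (μ : Measure Ω) [IsProbabilityMeasure μ]
    (p : ℝ) (hp : p ∈ Ioo (0:ℝ) 1) (N : ℕ)
    (Z : ℕ → Ω → ℝ) (hZmeas : ∀ i, Measurable (Z i))
    (hindep : ProbabilityTheory.iIndepFun (m := fun _ => Real.measurableSpace) Z μ)
    (hident : ∀ i, ProbabilityTheory.IdentDistrib (Z i) (Z 0) μ μ)
    (hZge : ∀ᵐ ω ∂μ, -1 ≤ Z 0 ω)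
    (hZint : Integrable (fun ω => (1 + Z 0 ω) ^ (1 - p)) μ) :
    ∃ πs ∈ Icc (0:ℝ) 1,
      (∀ π ∈ Icc (0:ℝ) 1,
        ∫ ω, (1 + π * Z 0 ω) ^ (1 - p) ∂μ ≤ ∫ ω, (1 + πs * Z 0 ω) ^ (1 - p) ∂μ) ∧
      sSup {v : ℝ | ∃ πf : ℕ → Ω → ℝ,
          (∀ i < N,
            Measurable[⨆ j ∈ Finset.range i, MeasurableSpace.comap (Z j) Real.measurableSpace]
              (πf i)) ∧
          (∀ i < N, ∀ ω, πf i ω ∈ Icc (0:ℝ) 1) ∧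
          v = ∫ ω, ∏ i ∈ Finset.range N, (1 + πf i ω * Z i ω) ^ (1 - p) ∂μ}
        = (∫ ω, (1 + πs * Z 0 ω) ^ (1 - p) ∂μ) ^ N ∧
      ∫ ω, ∏ i ∈ Finset.range N, (1 + πs * Z i ω) ^ (1 - p) ∂μ
        = (∫ ω, (1 + πs * Z 0 ω) ^ (1 - p) ∂μ) ^ N := by
  have he : 0 ≤ 1 - p := sub_nonneg.2 hp.2.le
  obtain ⟨πs, hπs, hmax⟩ := isCompact_Icc.exists_isMaxOn (nonempty_Icc.2 zero_le_one)
    (continuousOn_integral_rpow_one_add_mul (hZmeas 0) hZge hZint he)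
  have hconst := integral_prod_range_comp_eq_pow hZmeas hindep hident
    (g := fun z => (1 + πs * z) ^ (1 - p)) (by fun_prop) N
  refine ⟨πs, hπs, isMaxOn_iff.1 hmax, IsGreatest.csSup_eq ⟨?_, ?_⟩, hconst⟩
  · exact ⟨fun _ _ => πs, fun _ _ => measurable_const, fun _ _ _ => hπs, hconst.symm⟩
  · rintro v ⟨πf, hπf, hπf01, rfl⟩
    exact integral_prod_rpow_one_add_mul_le hZmeas hindep hident hZge he hZint
      (isMaxOn_iff.1 hmax) hπf hπf01
end
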